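/- arXiv:2501.15719 — 7 statements merged into one kernel-verified Lean document; each statement's English description precedes it below -/
import Mathlib

section
/- Let K be a totally real number field of degree d ≥ 2. Then every trace-minimal element of K is either totally positive or equal to 0. -/
open NumberField

/-- Let `K` be a totally real number field of degree `d ≥ 2`.  Then every trace-minimal
element of `K` is either totally positive or equal to `0`. -/
theorem stmt1
    (K : Type*) [Field K] [NumberField K] (d : ℕ) (hd2 : 2 ≤ d)
    (σ : Fin d → (K →+* ℝ)) (hσ : Function.Injective σ)
    (hd : d = Module.finrank ℚ K)
    (x : K)
    (hmin : ∀ u : (𝓞 K)ˣ, (∀ i, 0 < σ i ((u : 𝓞 K) : K)) →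
      Algebra.trace ℚ K x ≤ Algebra.trace ℚ K (((u : 𝓞 K) : K) * x)) :
    (∀ i, 0 < σ i x) ∨ x = 0 := by
  -- the complex embeddings corresponding to σ
  set f : Fin d → (K →+* ℂ) := fun i => Complex.ofRealHom.comp (σ i) with hf
  have hfinj : Function.Injective f := by
    intro i j h
    apply hσ
    ext k
    have := RingHom.congr_fun h k
    exact Complex.ofReal_injective this
  have hfbij : Function.Bijective f := by
    rw [Fintype.bijective_iff_injective_and_card]
    refine ⟨hfinj, ?_⟩
    rw [NumberField.Embeddings.card K ℂ, Fintype.card_fin, hd]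
  -- trace formula
  have htr : ∀ y : K, ((Algebra.trace ℚ K y : ℚ) : ℝ) = ∑ i, σ i y := by
    intro y
    have h1 : algebraMap ℚ ℂ (Algebra.trace ℚ K y) = ∑ τ : K →ₐ[ℚ] ℂ, τ y :=
      trace_eq_sum_embeddings (E := ℂ) (x := y)
    have h2 : (∑ τ : K →ₐ[ℚ] ℂ, τ y) = ∑ φ : K →+* ℂ, φ y :=
      (Fintype.sum_equiv (RingHom.equivRatAlgHom K ℂ) (fun φ => φ y) (fun τ => τ y)
        (fun φ => rfl)).symm
    have h3 : (∑ φ : K →+* ℂ, φ y) = ∑ i, f i y :=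
      (Fintype.sum_bijective f hfbij _ _ (fun i => rfl)).symm
    have : ((((Algebra.trace ℚ K y : ℚ) : ℝ)) : ℂ) = ((∑ i, σ i y : ℝ) : ℂ) := by
      rw [Complex.ofReal_sum]
      rw [show ((((Algebra.trace ℚ K y : ℚ) : ℝ)) : ℂ) = algebraMap ℚ ℂ (Algebra.trace ℚ K y) by
        push_cast; rfl]
      rw [h1, h2, h3]
      exact Finset.sum_congr rfl (fun i _ => rfl)
    exact_mod_cast this
  -- norm formula
  have hnorm : ∀ y : K, ((Algebra.norm ℚ y : ℚ) : ℝ) = ∏ i, σ i y := by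
    intro y
    have h1 : algebraMap ℚ ℂ (Algebra.norm ℚ y) = ∏ τ : K →ₐ[ℚ] ℂ, τ y :=
      Algebra.norm_eq_prod_embeddings ℚ ℂ (x := y)
    have h2 : (∏ τ : K →ₐ[ℚ] ℂ, τ y) = ∏ φ : K →+* ℂ, φ y :=
      (Fintype.prod_equiv (RingHom.equivRatAlgHom K ℂ) (fun φ => φ y) (fun τ => τ y)
        (fun φ => rfl)).symm
    have h3 : (∏ φ : K →+* ℂ, φ y) = ∏ i, f i y :=
      (Fintype.prod_bijective f hfbij _ _ (fun i => rfl)).symm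
    have : ((((Algebra.norm ℚ y : ℚ) : ℝ)) : ℂ) = ((∏ i, σ i y : ℝ) : ℂ) := by
      rw [Complex.ofReal_prod]
      rw [show ((((Algebra.norm ℚ y : ℚ) : ℝ)) : ℂ) = algebraMap ℚ ℂ (Algebra.norm ℚ y) by
        push_cast; rfl]
      rw [h1, h2, h3]
      exact Finset.prod_congr rfl (fun i _ => rfl)
    exact_mod_cast this
  -- each f i gives an infinite place; they are pairwise distinct
  set w : Fin d → InfinitePlace K := fun i => InfinitePlace.mk (f i) with hw
  have hwapp : ∀ i (y : K), w i y = |σ i y| := by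
    intro i y
    rw [hw]
    simp only [InfinitePlace.apply]
    rw [show f i y = ((σ i y : ℝ) : ℂ) from rfl, Complex.norm_real, Real.norm_eq_abs]
  have hwinj : Function.Injective w := by
    intro i j h
    rcases (NumberField.InfinitePlace.mk_eq_iff).mp h with h' | h'
    · exact hfinj h'
    · apply hfinj
      rw [← h']
      ext k
      exact (Complex.conj_ofReal ((σ i) k)).symm
  -- main argument
  by_cases hx : x = 0
  · exact Or.inr hx
  refine Or.inl ?_
  by_contra hnp
  push_neg at hnp
  obtain ⟨i0, hi0⟩ := hnp
  have hxne : ∀ i, σ i x ≠ 0 := fun i h => hx (by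
    have : (σ i) x = (σ i) 0 := by simpa using h
    exact (σ i).injective this)
  have hi0' : σ i0 x < 0 := lt_of_le_of_ne hi0 (hxne i0)
  -- get the unit from Dirichlet's machinery
  obtain ⟨v, hv⟩ := NumberField.Units.dirichletUnitTheorem.exists_unit K (w i0)
  -- σ j v ≠ 0
  have hvne : ∀ j, σ j ((v : 𝓞 K) : K) ≠ 0 := by
    intro j
    have h1 : ((v : 𝓞 K) : K) * (((v⁻¹ : (𝓞 K)ˣ) : 𝓞 K) : K) = 1 := by
      rw [← map_mul]
      norm_num
    intro h
    have := congrArg (σ j) h1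
    rw [map_mul, h, map_one, zero_mul] at this
    exact zero_ne_one this
  -- |σ j v| < 1 for j ≠ i0
  have hvlt : ∀ j, j ≠ i0 → |σ j ((v : 𝓞 K) : K)| < 1 := by
    intro j hj
    have h1 := hv (w j) (fun h => hj (hwinj h))
    have h2 : w j ((v : 𝓞 K) : K) = |σ j ((v : 𝓞 K) : K)| := hwapp j _
    have hpos : 0 < |σ j ((v : 𝓞 K) : K)| := abs_pos.mpr (hvne j)
    by_contra hge
    push_neg at hge
    have : 0 ≤ Real.log (w j ((v : 𝓞 K) : K)) := by
      rw [h2]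
      exact Real.log_nonneg hge
    have h1' : Real.log (w j ((v : 𝓞 K) : K)) < 0 := h1
    linarith
  -- product of |σ j v| is 1
  have hprod : ∏ j, |σ j ((v : 𝓞 K) : K)| = 1 := by
    have hu : |(Algebra.norm ℚ ((v : 𝓞 K) : K) : ℚ)| = 1 :=
      NumberField.isUnit_iff_norm.mp v.isUnit
    have : |((Algebra.norm ℚ ((v : 𝓞 K) : K) : ℚ) : ℝ)| = 1 := by
      rw [← Rat.cast_abs, hu]; norm_num
    rw [hnorm, Finset.abs_prod] at this
    exact this
  -- hence |σ i0 v| > 1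
  have hvgt : 1 < |σ i0 ((v : 𝓞 K) : K)| := by
    have hrest : ∏ j ∈ Finset.univ.erase i0, |σ j ((v : 𝓞 K) : K)| < 1 := by
      have hne : (Finset.univ.erase i0 : Finset (Fin d)).Nonempty := by
        have : 1 < (Finset.univ : Finset (Fin d)).card := by
          simpa using lt_of_lt_of_le one_lt_two hd2
        obtain ⟨j, hj⟩ := Finset.exists_mem_ne this i0
        exact ⟨j, Finset.mem_erase.mpr ⟨hj.2, Finset.mem_univ j⟩⟩
      calc ∏ j ∈ Finset.univ.erase i0, |σ j ((v : 𝓞 K) : K)|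
          < ∏ j ∈ Finset.univ.erase i0, 1 := by
            apply Finset.prod_lt_prod_of_nonempty _ _ hne
            · intro j _; exact abs_pos.mpr (hvne j)
            · intro j hj; exact hvlt j (Finset.mem_erase.mp hj).1
        _ = 1 := Finset.prod_const_one
    have hsplit : |σ i0 ((v : 𝓞 K) : K)| * ∏ j ∈ Finset.univ.erase i0, |σ j ((v : 𝓞 K) : K)| = 1 := by
      rw [← Finset.prod_erase_mul Finset.univ _ (Finset.mem_univ i0)] at hprod
      linarith [hprod]
    nlinarith [abs_pos.mpr (hvne i0), Finset.prod_pos (fun j (_ : j ∈ Finset.univ.erase i0) => abs_pos.mpr (hvne j))]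
  -- setup the contradiction
  set t : Fin d → ℝ := fun j => σ j ((v : 𝓞 K) : K) with ht
  set a : ℝ := (t i0) ^ 2 with ha
  have ha1 : 1 < a := by
    have h1 := sq_abs (t i0)
    have h2 : (1:ℝ) < |t i0| := hvgt
    nlinarith
  set C : ℝ := ∑ j ∈ Finset.univ.erase i0, |σ j x| with hC
  set T : ℝ := ((Algebra.trace ℚ K x : ℚ) : ℝ) with hT
  obtain ⟨n, hn⟩ := pow_unbounded_of_one_lt ((C - T) / (-(σ i0 x))) ha1
  have hnbig : C - T < a ^ n * (-(σ i0 x)) := by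
    rw [div_lt_iff₀ (by linarith : (0:ℝ) < -(σ i0 x))] at hn
    linarith
  -- the totally positive unit
  set u : (𝓞 K)ˣ := v ^ (2 * n) with hu
  have hucoe : ∀ j, σ j ((u : 𝓞 K) : K) = (t j) ^ (2 * n) := by
    intro j
    rw [hu]
    simp [Units.val_pow_eq_pow_val, map_pow]; rfl
  have hupos : ∀ j, 0 < σ j ((u : 𝓞 K) : K) := by
    intro j
    rw [hucoe j, pow_mul]
    exact pow_pos (lt_of_le_of_ne (sq_nonneg _) (Ne.symm (pow_ne_zero 2 (hvne j)))) n
  have hle := hmin u hupos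
  have hle' : T ≤ ((Algebra.trace ℚ K (((u : 𝓞 K) : K) * x) : ℚ) : ℝ) := by
    rw [hT]; exact_mod_cast hle
  rw [htr] at hle'
  have hterm : ∀ j, σ j (((u : 𝓞 K) : K) * x) = (t j) ^ (2 * n) * σ j x := by
    intro j
    rw [map_mul, hucoe j]
  have hsum : (∑ j, σ j (((u : 𝓞 K) : K) * x)) ≤ C + a ^ n * σ i0 x := by
    rw [← Finset.sum_erase_add Finset.univ _ (Finset.mem_univ i0)]
    apply add_le_add
    · rw [hC]
      apply Finset.sum_le_sum
      intro j hj
      rw [hterm j]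
      have h01 : 0 ≤ (t j) ^ (2 * n) := by
        rw [mul_comm 2 n, pow_mul]; positivity
      have h11 : (t j) ^ (2 * n) ≤ 1 := by
        have : |t j| < 1 := hvlt j (Finset.mem_erase.mp hj).1
        calc (t j) ^ (2 * n) = |t j| ^ (2 * n) := by
              rw [pow_mul, pow_mul, sq_abs]
          _ ≤ 1 := pow_le_one₀ (abs_nonneg _) this.le
      calc (t j) ^ (2 * n) * σ j x ≤ (t j) ^ (2 * n) * |σ j x| :=
            mul_le_mul_of_nonneg_left (le_abs_self _) h01
        _ ≤ 1 * |σ j x| := mul_le_mul_of_nonneg_right h11 (abs_nonneg _)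
        _ = |σ j x| := one_mul _
    · exact le_of_eq (by rw [hterm i0, pow_mul, ha])
  linarith
end

section
/- Let K be a totally real number field of degree d ≥ 2, and for each 1 ≤ i ≤ d let u⁽ⁱ⁾ be a totally positive unit of O_K with σ_j(u⁽ⁱ⁾) > 1 if and only if j = i; set b = max_{i ≠ j} (σ_i(u⁽ⁱ⁾) − 1)/(1 − σ_j(u⁽ⁱ⁾)). If x ∈ K is totally positive and max_j x_j / min_j x_j > b, then there exists i with tr(u⁽ⁱ⁾ x) < tr(x); in particular every totally positive element of K that is not b-balanced is not trace-minimal. -/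
open NumberField

/-- Let `K` be totally real of degree `d ≥ 2`, with totally positive units `u i` satisfying
`σ j (u i) > 1 ↔ j = i`, and let `b = max_{i ≠ j} (σ i (u i) − 1)/(1 − σ j (u i))`.
If `x ∈ K` is totally positive and `max_j x_j / min_j x_j > b`, then some `u i` reduces the
trace of `x`; in particular `x` is not trace-minimal. -/
theorem stmt2
    (K : Type*) [Field K] [NumberField K] (d : ℕ) (hd2 : 2 ≤ d)
    (σ : Fin d → (K →+* ℝ)) (hσ : Function.Injective σ)
    (hd : d = Module.finrank ℚ K)
    (u : Fin d → (𝓞 K)ˣ)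
    (hupos : ∀ i j, 0 < σ j ((u i : 𝓞 K) : K))
    (hu1 : ∀ i j, 1 < σ j ((u i : 𝓞 K) : K) ↔ j = i)
    (b : ℝ)
    (hb : IsGreatest {r : ℝ | ∃ i j, i ≠ j ∧
      r = (σ i ((u i : 𝓞 K) : K) - 1) / (1 - σ j ((u i : 𝓞 K) : K))} b)
    (x : K) (hx : ∀ i, 0 < σ i x)
    (hne : (Finset.univ : Finset (Fin d)).Nonempty)
    (hratio : b < (Finset.univ.sup' hne fun j => σ j x) /
      (Finset.univ.inf' hne fun j => σ j x)) :
    (∃ i, Algebra.trace ℚ K (((u i : 𝓞 K) : K) * x) < Algebra.trace ℚ K x) ∧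
      ¬ (∀ v : (𝓞 K)ˣ, (∀ i, 0 < σ i ((v : 𝓞 K) : K)) →
        Algebra.trace ℚ K x ≤ Algebra.trace ℚ K (((v : 𝓞 K) : K) * x)) := by
  classical
  -- The d real embeddings give all the complex embeddings.
  set f : Fin d → (K →+* ℂ) := fun j => Complex.ofRealHom.comp (σ j) with hf
  have hfinj : Function.Injective f := by
    intro a c hac
    apply hσ
    ext y
    have := RingHom.congr_fun hac y
    simpa [hf] using this
  have hfbij : Function.Bijective f := by
    refine (Fintype.bijective_iff_injective_and_card f).mpr ⟨hfinj, ?_⟩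
    rw [NumberField.Embeddings.card K ℂ, ← hd, Fintype.card_fin]
  have hsumC : ∀ y : K, (∑ φ : K →ₐ[ℚ] ℂ, φ y) = ((∑ j, σ j y : ℝ) : ℂ) := by
    intro y
    rw [← Fintype.sum_equiv (RingHom.equivRatAlgHom K ℂ) (fun ψ : K →+* ℂ => ψ y)
      (fun φ : K →ₐ[ℚ] ℂ => φ y) (fun ψ => rfl)]
    rw [← Fintype.sum_bijective f hfbij (fun j => f j y) (fun ψ : K →+* ℂ => ψ y)
      (fun j => rfl)]
    push_cast
    rfl
  have hprodC : ∀ y : K, (∏ φ : K →ₐ[ℚ] ℂ, φ y) = ((∏ j, σ j y : ℝ) : ℂ) := by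
    intro y
    rw [← Fintype.prod_equiv (RingHom.equivRatAlgHom K ℂ) (fun ψ : K →+* ℂ => ψ y)
      (fun φ : K →ₐ[ℚ] ℂ => φ y) (fun ψ => rfl)]
    rw [← Fintype.prod_bijective f hfbij (fun j => f j y) (fun ψ : K →+* ℂ => ψ y)
      (fun j => rfl)]
    push_cast
    rfl
  -- trace and norm formulas
  have key : ∀ y : K, ((Algebra.trace ℚ K y : ℚ) : ℝ) = ∑ j, σ j y := by
    intro y
    have h1 : algebraMap ℚ ℂ (Algebra.trace ℚ K y) = ∑ φ : K →ₐ[ℚ] ℂ, φ y :=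
      trace_eq_sum_embeddings ℂ
    rw [hsumC y, eq_ratCast (algebraMap ℚ ℂ)] at h1
    exact_mod_cast h1
  have keyN : ∀ y : K, ((Algebra.norm ℚ y : ℚ) : ℝ) = ∏ j, σ j y := by
    intro y
    have h1 : algebraMap ℚ ℂ (Algebra.norm ℚ y) = ∏ φ : K →ₐ[ℚ] ℂ, φ y :=
      Algebra.norm_eq_prod_embeddings ℚ ℂ y
    rw [hprodC y, eq_ratCast (algebraMap ℚ ℂ)] at h1
    exact_mod_cast h1
  -- the product of the embeddings of each unit is 1
  have hnormu : ∀ i, (∏ j, σ j ((u i : 𝓞 K) : K)) = 1 := by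
    intro i
    have h1 : |(RingOfIntegers.norm ℚ ((u i : 𝓞 K)) : ℚ)| = 1 :=
      NumberField.isUnit_iff_norm.mp (u i).isUnit
    rw [RingOfIntegers.coe_norm] at h1
    have h2 : |((Algebra.norm ℚ (((u i : 𝓞 K)) : K) : ℚ) : ℝ)| = 1 := by
      exact_mod_cast h1
    rw [keyN] at h2
    have hpos : 0 < ∏ j, σ j ((u i : 𝓞 K) : K) :=
      Finset.prod_pos fun j _ => hupos i j
    rwa [abs_of_pos hpos] at h2
  -- embeddings other than σ i send u i strictly below 1
  have hlt1 : ∀ i j, j ≠ i → σ j ((u i : 𝓞 K) : K) < 1 := by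
    intro i j hji
    have hle : σ j ((u i : 𝓞 K) : K) ≤ 1 :=
      le_of_not_gt fun h => hji ((hu1 i j).mp h)
    rcases lt_or_eq_of_le hle with h | h
    · exact h
    · exfalso
      have h1 : ((u i : 𝓞 K) : K) = 1 := (σ j).injective (by rw [h, map_one])
      have := (hu1 i i).mpr rfl
      rw [h1, map_one] at this
      exact lt_irrefl _ this
  -- b ≥ 1
  have hbge1 : (1 : ℝ) ≤ b := by
    obtain ⟨i, -⟩ := hne
    set s := σ i ((u i : 𝓞 K) : K) with hs_def
    have hs : 1 < s := (hu1 i i).mpr rfl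
    have hexj : ∃ j, j ≠ i ∧ 2 - s ≤ σ j ((u i : 𝓞 K) : K) := by
      by_contra hcon
      push_neg at hcon
      obtain ⟨j', hj'⟩ : ∃ j' : Fin d, j' ≠ i := by
        have : 1 < Fintype.card (Fin d) := by simp only [Fintype.card_fin]; omega
        exact Fintype.exists_ne_of_one_lt_card this i
      have h2s_pos : 0 < 2 - s := lt_trans (hupos i j') (hcon j' hj')
      have h2s_lt1 : 2 - s < 1 := by linarith
      have hjne : j' ∈ Finset.univ.erase i := Finset.mem_erase.mpr ⟨hj', Finset.mem_univ j'⟩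
      have hltp : ∏ j ∈ Finset.univ.erase i, σ j ((u i : 𝓞 K) : K) <
          ∏ _j ∈ Finset.univ.erase i, (2 - s) :=
        Finset.prod_lt_prod_of_nonempty (fun j _ => hupos i j)
          (fun j hj => hcon j (Finset.ne_of_mem_erase hj)) ⟨j', hjne⟩
      rw [Finset.prod_const, Finset.card_erase_of_mem (Finset.mem_univ i),
        Finset.card_univ, Fintype.card_fin] at hltp
      have h1 : (1 : ℝ) = s * ∏ j ∈ Finset.univ.erase i, σ j ((u i : 𝓞 K) : K) := by
        rw [hs_def]
        exact ((Finset.mul_prod_erase Finset.univ (fun j => σ j ((u i : 𝓞 K) : K))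
          (Finset.mem_univ i)).trans (hnormu i)).symm
      have hpow : (2 - s) ^ (d - 1) ≤ 2 - s :=
        pow_le_of_le_one (le_of_lt h2s_pos) (le_of_lt h2s_lt1) (by omega)
      have hs_pos : 0 < s := by linarith
      have : (1 : ℝ) < s * (2 - s) ^ (d - 1) := by
        rw [h1]
        exact mul_lt_mul_of_pos_left hltp hs_pos
      have h2 : s * (2 - s) ^ (d - 1) ≤ s * (2 - s) :=
        mul_le_mul_of_nonneg_left hpow (le_of_lt hs_pos)
      nlinarith [mul_pos (sub_pos.mpr hs) (sub_pos.mpr hs)]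
    obtain ⟨j, hji, hge⟩ := hexj
    have hj1 : σ j ((u i : 𝓞 K) : K) < 1 := hlt1 i j hji
    have hr : (1 : ℝ) ≤ (s - 1) / (1 - σ j ((u i : 𝓞 K) : K)) :=
      (one_le_div (by linarith)).mpr (by linarith)
    have hmem : (s - 1) / (1 - σ j ((u i : 𝓞 K) : K)) ∈
        {r : ℝ | ∃ i j, i ≠ j ∧
          r = (σ i ((u i : 𝓞 K) : K) - 1) / (1 - σ j ((u i : 𝓞 K) : K))} :=
      ⟨i, j, Ne.symm hji, rfl⟩
    exact le_trans hr (hb.2 hmem)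
  -- argmax and argmin
  obtain ⟨i0, -, hi0⟩ := Finset.exists_mem_eq_sup' hne (fun j => σ j x)
  obtain ⟨j0, -, hj0⟩ := Finset.exists_mem_eq_inf' hne (fun j => σ j x)
  have hgt : b < σ i0 x / σ j0 x := by rwa [hi0, hj0] at hratio
  have hij : σ j0 x < σ i0 x := by
    have h1 : 1 < σ i0 x / σ j0 x := lt_of_le_of_lt hbge1 hgt
    rw [lt_div_iff₀ (hx j0)] at h1
    linarith
  have hne0 : i0 ≠ j0 := fun h => by rw [h] at hij; exact lt_irrefl _ hij
  set w := ((u j0 : 𝓞 K) : K) with hw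
  -- the main real inequality
  have hkey : ∑ j, σ j (w * x) < ∑ j, σ j x := by
    have hsplit : ∀ t : Fin d → ℝ, ∑ j, t j =
        t j0 + (t i0 + ∑ j ∈ (Finset.univ.erase j0).erase i0, t j) := by
      intro t
      rw [← Finset.add_sum_erase Finset.univ t (Finset.mem_univ j0),
        ← Finset.add_sum_erase (Finset.univ.erase j0) t
          (Finset.mem_erase.mpr ⟨hne0, Finset.mem_univ i0⟩)]
    simp only [map_mul]
    rw [hsplit (fun j => σ j w * σ j x), hsplit (fun j => σ j x)]
    have hrest : ∑ j ∈ (Finset.univ.erase j0).erase i0, σ j w * σ j x ≤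
        ∑ j ∈ (Finset.univ.erase j0).erase i0, σ j x := by
      refine Finset.sum_le_sum fun j hj => ?_
      have hj0' : j ≠ j0 := Finset.ne_of_mem_erase (Finset.mem_of_mem_erase hj)
      have h1 : σ j w ≤ 1 := le_of_lt (hlt1 j0 j hj0')
      nlinarith [hx j]
    have hA : 0 < σ j0 w - 1 := by
      have := (hu1 j0 j0).mpr rfl; rw [← hw] at this; linarith
    have hB : 0 < 1 - σ i0 w := by
      have := hlt1 j0 i0 hne0; rw [← hw] at this; linarith
    have hr : (σ j0 w - 1) / (1 - σ i0 w) ≤ b := by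
      refine hb.2 ⟨j0, i0, Ne.symm hne0, ?_⟩
      rw [hw]
    have hlt : (σ j0 w - 1) / (1 - σ i0 w) < σ i0 x / σ j0 x := lt_of_le_of_lt hr hgt
    rw [div_lt_div_iff₀ hB (hx j0)] at hlt
    have hmain : σ j0 w * σ j0 x + σ i0 w * σ i0 x < σ j0 x + σ i0 x := by nlinarith
    linarith
  have htr : Algebra.trace ℚ K (w * x) < Algebra.trace ℚ K x := by
    have h3 : ((Algebra.trace ℚ K (w * x) : ℚ) : ℝ) < ((Algebra.trace ℚ K x : ℚ) : ℝ) := by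
      rw [key (w * x), key x]; exact hkey
    exact_mod_cast h3
  refine ⟨⟨j0, htr⟩, fun hcl => ?_⟩
  exact absurd (hcl (u j0) (hupos j0)) (not_le.mpr htr)
end

section
/- Let K be a totally real number field of degree d ≥ 2, and for each 1 ≤ i ≤ d let u⁽ⁱ⁾ be a totally positive unit of O_K with σ_j(u⁽ⁱ⁾) > 1 if and only if j = i; set b = max_{i ≠ j} (σ_i(u⁽ⁱ⁾) − 1)/(1 − σ_j(u⁽ⁱ⁾)). Let S be the set consisting of the units u⁽¹⁾, …, u⁽ᵈ⁾ together with all totally positive units u of O_K satisfying σ_j(u) ≤ d·b for all j (a finite set). If x ∈ K is totally positive and tr(ux) ≥ tr(x) for all u ∈ S, then x is trace-minimal. -/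
open NumberField Finset

section Aux

lemma trace_as_sum (K : Type*) [Field K] [NumberField K] (d : ℕ)
    (σ : Fin d → (K →+* ℝ)) (hσ : Function.Injective σ)
    (hd : d = Module.finrank ℚ K) (z : K) :
    ((Algebra.trace ℚ K z : ℚ) : ℝ) = ∑ j, σ j z := by
  set τ : Fin d → (K →+* ℂ) := fun j => Complex.ofRealHom.comp (σ j) with hτ
  have hinj : Function.Injective τ := by
    intro j1 j2 h
    apply hσ
    ext t
    have := RingHom.congr_fun h t
    simpa [hτ] using this
  have hbij : Function.Bijective τ := by
    rw [Fintype.bijective_iff_injective_and_card]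
    exact ⟨hinj, by rw [Fintype.card_fin, NumberField.Embeddings.card K ℂ, hd]⟩
  have h1 : algebraMap ℚ ℂ (Algebra.trace ℚ K z) = ∑ φ : K →ₐ[ℚ] ℂ, φ z :=
    trace_eq_sum_embeddings ℂ
  have h2 : ∑ φ : K →+* ℂ, φ z = ∑ φ : K →ₐ[ℚ] ℂ, φ z :=
    Fintype.sum_equiv (RingHom.equivRatAlgHom K ℂ) (fun φ => φ z) (fun ψ => ψ z)
      (fun φ => rfl)
  have h3 : ∑ j, τ j z = ∑ φ : K →+* ℂ, φ z :=
    Fintype.sum_bijective τ hbij (fun j => τ j z) (fun φ => φ z) (fun j => rfl)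
  apply Complex.ofReal_injective
  have : ((((Algebra.trace ℚ K z : ℚ) : ℝ)) : ℂ) = algebraMap ℚ ℂ (Algebra.trace ℚ K z) := by
    rw [eq_ratCast (algebraMap ℚ ℂ)]; push_cast; ring
  rw [this, h1, ← h2, ← h3]
  push_cast
  rfl
open Finset

lemma key_ineq {d : ℕ} (a : Fin d → Fin d → ℝ) (b : ℝ)
    (hbub : ∀ i j, i ≠ j → a i i - 1 ≤ b * (1 - a i j))
    (ha2 : ∀ i j, j ≠ i → a i j < 1)
    (y : Fin d → ℝ) (hy : ∀ j, 0 < y j)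
    (hs : ∀ i, ∑ j, y j ≤ ∑ j, a i j * y j) :
    ∀ i j, i ≠ j → y j ≤ b * y i := by
  intro i j hij
  have hji : j ∈ Finset.univ.erase i := Finset.mem_erase.mpr ⟨hij.symm, Finset.mem_univ j⟩
  have h1 : ∑ j' ∈ Finset.univ.erase i, (1 - a i j') * y j' ≤ (a i i - 1) * y i := by
    have e1 : ∑ j', y j' = y i + ∑ j' ∈ Finset.univ.erase i, y j' :=
      (Finset.add_sum_erase _ _ (Finset.mem_univ i)).symm
    have e2 : ∑ j', a i j' * y j' = a i i * y i + ∑ j' ∈ Finset.univ.erase i, a i j' * y j' :=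
      (Finset.add_sum_erase _ _ (Finset.mem_univ i)).symm
    have e3 : ∑ j' ∈ Finset.univ.erase i, (1 - a i j') * y j'
        = ∑ j' ∈ Finset.univ.erase i, y j' - ∑ j' ∈ Finset.univ.erase i, a i j' * y j' := by
      rw [← Finset.sum_sub_distrib]
      exact Finset.sum_congr rfl fun _ _ => by ring
    have h := hs i
    rw [e1, e2] at h
    rw [e3]
    linarith
  have h2 : (1 - a i j) * y j ≤ ∑ j' ∈ Finset.univ.erase i, (1 - a i j') * y j' :=
    Finset.single_le_sum (f := fun j' => (1 - a i j') * y j')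
      (fun j' hj' => mul_nonneg (by linarith [ha2 i j' (Finset.mem_erase.mp hj').1]) (hy j').le) hji
  have h4 : 0 < 1 - a i j := by linarith [ha2 i j hij.symm]
  have h5 : (1 - a i j) * y j ≤ (1 - a i j) * (b * y i) := by
    nlinarith [mul_le_mul_of_nonneg_right (hbub i j hij) (hy i).le]
  exact le_of_mul_le_mul_left h5 h4
open NumberField Finset


end Aux

/-- Let `K` be totally real of degree `d ≥ 2`, with units `u i` and bound `b` as before, and
let `S` consist of the `u i` together with all totally positive units whose real embeddings
are all at most `d·b`.  If `x ∈ K` is totally positive and `tr(ux) ≥ tr(x)` for all `u ∈ S`,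
then `x` is trace-minimal. -/
theorem stmt3
    (K : Type*) [Field K] [NumberField K] (d : ℕ) (hd2 : 2 ≤ d)
    (σ : Fin d → (K →+* ℝ)) (hσ : Function.Injective σ)
    (hd : d = Module.finrank ℚ K)
    (u : Fin d → (𝓞 K)ˣ)
    (hupos : ∀ i j, 0 < σ j ((u i : 𝓞 K) : K))
    (hu1 : ∀ i j, 1 < σ j ((u i : 𝓞 K) : K) ↔ j = i)
    (b : ℝ)
    (hb : IsGreatest {r : ℝ | ∃ i j, i ≠ j ∧
      r = (σ i ((u i : 𝓞 K) : K) - 1) / (1 - σ j ((u i : 𝓞 K) : K))} b)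
    (x : K) (hx : ∀ i, 0 < σ i x)
    (hxu : ∀ i, Algebra.trace ℚ K x ≤ Algebra.trace ℚ K (((u i : 𝓞 K) : K) * x))
    (hxS : ∀ v : (𝓞 K)ˣ, (∀ j, 0 < σ j ((v : 𝓞 K) : K)) →
      (∀ j, σ j ((v : 𝓞 K) : K) ≤ (d : ℝ) * b) →
      Algebra.trace ℚ K x ≤ Algebra.trace ℚ K (((v : 𝓞 K) : K) * x)) :
    ∀ w : (𝓞 K)ˣ, (∀ i, 0 < σ i ((w : 𝓞 K) : K)) →
      Algebra.trace ℚ K x ≤ Algebra.trace ℚ K (((w : 𝓞 K) : K) * x) := by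
  intro w hw
  by_contra hcon
  push_neg at hcon
  have trsum : ∀ z : K, ((Algebra.trace ℚ K z : ℚ) : ℝ) = ∑ j, σ j z :=
    trace_as_sum K d σ hσ hd
  set a : Fin d → Fin d → ℝ := fun i j => σ j ((u i : 𝓞 K) : K) with ha
  have ha1 : ∀ i, 1 < a i i := fun i => (hu1 i i).mpr rfl
  have ha2 : ∀ i j, j ≠ i → a i j < 1 := by
    intro i j hji
    have hle : a i j ≤ 1 := not_lt.mp (fun h => hji ((hu1 i j).mp h))
    rcases hle.lt_or_eq with h | h
    · exact h
    · exfalso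
      have h1 : ((u i : 𝓞 K) : K) = 1 := (σ j).injective (by rw [map_one]; exact h)
      have := ha1 i
      rw [ha] at this
      simp only [h1, map_one] at this
      exact lt_irrefl 1 this
  have hbub : ∀ i j, i ≠ j → a i i - 1 ≤ b * (1 - a i j) := by
    intro i j hij
    have h4 : 0 < 1 - a i j := by linarith [ha2 i j hij.symm]
    have hm := hb.2 ⟨i, j, hij, rfl⟩
    calc a i i - 1 = (a i i - 1) / (1 - a i j) * (1 - a i j) := by field_simp
    _ ≤ b * (1 - a i j) := mul_le_mul_of_nonneg_right hm h4.le
  have hbpos : 0 < b := by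
    obtain ⟨i, j, hij, hbe⟩ := hb.1
    have h4 : 0 < 1 - a i j := by linarith [ha2 i j hij.symm]
    rw [hbe]
    exact div_pos (by linarith [ha1 i]) h4
  -- x inequalities
  set X : Fin d → ℝ := fun j => σ j x with hX
  have hXpos : ∀ j, 0 < X j := hx
  have hxineq : ∀ i, ∑ j, X j ≤ ∑ j, a i j * X j := by
    intro i
    have hc : ((Algebra.trace ℚ K x : ℚ) : ℝ)
        ≤ ((Algebra.trace ℚ K (((u i : 𝓞 K) : K) * x) : ℚ) : ℝ) := by exact_mod_cast hxu i
    rw [trsum, trsum] at hc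
    refine hc.trans_eq (Finset.sum_congr rfl fun j _ => ?_)
    rw [map_mul]
  have hxb : ∀ i j, i ≠ j → X j ≤ b * X i := key_ineq a b hbub ha2 X hXpos hxineq
  have hb1 : (1 : ℝ) ≤ b := by
    have hne : (⟨0, by omega⟩ : Fin d) ≠ ⟨1, by omega⟩ := by simp [Fin.ext_iff]
    nlinarith [hxb ⟨0, by omega⟩ ⟨1, by omega⟩ hne, hxb ⟨1, by omega⟩ ⟨0, by omega⟩ hne.symm,
      hXpos (⟨0, by omega⟩ : Fin d), hXpos (⟨1, by omega⟩ : Fin d)]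
  -- denominator
  have halg : IsAlgebraic ℤ x :=
    (IsFractionRing.isAlgebraic_iff ℤ ℚ K).mpr (Algebra.IsAlgebraic.isAlgebraic x)
  obtain ⟨m, hm0, hmx⟩ := halg.exists_integral_multiple
  have hmint : IsIntegral ℤ ((m : K) * x) := by
    rwa [zsmul_eq_mul] at hmx
  obtain ⟨n, hn0, hnint⟩ : ∃ n : ℤ, 0 < n ∧ IsIntegral ℤ ((n : K) * x) := by
    rcases hm0.lt_or_gt with h | h
    · refine ⟨-m, by omega, ?_⟩
      have : ((-m : ℤ) : K) * x = -((m : K) * x) := by push_cast; ring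
      rw [this]; exact hmint.neg
    · exact ⟨m, h, hmint⟩
  have key_int : ∀ w' : (𝓞 K)ˣ,
      ∃ k : ℤ, (k : ℚ) = (n : ℚ) * Algebra.trace ℚ K (((w' : 𝓞 K) : K) * x) := by
    intro w'
    have h1 : IsIntegral ℤ (((w' : 𝓞 K) : K) * ((n : K) * x)) :=
      (RingOfIntegers.isIntegral_coe _).mul hnint
    have h2 : IsIntegral ℤ (Algebra.trace ℚ K (((w' : 𝓞 K) : K) * ((n : K) * x))) :=
      Algebra.isIntegral_trace h1
    obtain ⟨k, hk⟩ := IsIntegrallyClosed.isIntegral_iff.mp h2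
    refine ⟨k, ?_⟩
    rw [eq_intCast] at hk
    rw [hk]
    have he : ((w' : 𝓞 K) : K) * ((n : K) * x) = (n : ℚ) • (((w' : 𝓞 K) : K) * x) := by
      rw [Algebra.smul_def, eq_ratCast]; push_cast; ring
    rw [he, map_smul, smul_eq_mul]
  -- trace positivity
  have trpos : ∀ w' : (𝓞 K)ˣ, (∀ j, 0 < σ j ((w' : 𝓞 K) : K)) →
      0 < Algebra.trace ℚ K (((w' : 𝓞 K) : K) * x) := by
    intro w' hw'
    have h : (0 : ℝ) < ((Algebra.trace ℚ K (((w' : 𝓞 K) : K) * x) : ℚ) : ℝ) := by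
      rw [trsum]
      refine Finset.sum_pos (fun j _ => ?_) ⟨⟨0, by omega⟩, Finset.mem_univ _⟩
      rw [map_mul]; exact mul_pos (hw' j) (hx j)
    exact_mod_cast h
  -- least element
  set P : ℤ → Prop := fun k => ∃ w' : (𝓞 K)ˣ, (∀ j, 0 < σ j ((w' : 𝓞 K) : K)) ∧
    (k : ℚ) = (n : ℚ) * Algebra.trace ℚ K (((w' : 𝓞 K) : K) * x) ∧
    Algebra.trace ℚ K (((w' : 𝓞 K) : K) * x) < Algebra.trace ℚ K x with hP
  have hbdd : ∀ k, P k → (0 : ℤ) ≤ k := by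
    rintro k ⟨w', hw', hk, -⟩
    have h1 := trpos w' hw'
    have hn : (0 : ℚ) < (n : ℚ) := by exact_mod_cast hn0
    have : (0 : ℚ) ≤ (k : ℚ) := by rw [hk]; positivity
    exact_mod_cast this
  obtain ⟨lb, hPlb, hmin⟩ := Int.exists_least_of_bdd ⟨0, hbdd⟩
    ⟨(key_int w).choose, w, hw, (key_int w).choose_spec, hcon⟩
  obtain ⟨w0, hw0pos, hlb, hw0lt⟩ := hPlb
  have hn : (0 : ℚ) < (n : ℚ) := by exact_mod_cast hn0
  have hmin' : ∀ v : (𝓞 K)ˣ, (∀ j, 0 < σ j ((v : 𝓞 K) : K)) →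
      Algebra.trace ℚ K (((w0 : 𝓞 K) : K) * x) ≤ Algebra.trace ℚ K (((v : 𝓞 K) : K) * x) := by
    intro v hv
    by_cases hvt : Algebra.trace ℚ K (((v : 𝓞 K) : K) * x) < Algebra.trace ℚ K x
    · obtain ⟨k, hk⟩ := key_int v
      have hlk : lb ≤ k := hmin k ⟨v, hv, hk, hvt⟩
      have hlk' : (lb : ℚ) ≤ (k : ℚ) := by exact_mod_cast hlk
      rw [hlb, hk] at hlk'
      exact le_of_mul_le_mul_left hlk' hn
    · linarith [not_lt.mp hvt]
  -- Y inequalities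
  set Y : Fin d → ℝ := fun j => σ j (((w0 : 𝓞 K) : K) * x) with hY
  have hYpos : ∀ j, 0 < Y j := by
    intro j; rw [hY]; simp only [map_mul]; exact mul_pos (hw0pos j) (hx j)
  have hYineq : ∀ i, ∑ j, Y j ≤ ∑ j, a i j * Y j := by
    intro i
    have hvpos : ∀ j, 0 < σ j (((w0 * u i : (𝓞 K)ˣ) : 𝓞 K) : K) := by
      intro j
      push_cast
      rw [map_mul]
      exact mul_pos (hw0pos j) (hupos i j)
    have h := hmin' (w0 * u i) hvpos
    have hc : ((Algebra.trace ℚ K (((w0 : 𝓞 K) : K) * x) : ℚ) : ℝ)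
        ≤ ((Algebra.trace ℚ K ((((w0 * u i : (𝓞 K)ˣ) : 𝓞 K) : K) * x) : ℚ) : ℝ) := by
      exact_mod_cast h
    rw [trsum, trsum] at hc
    refine hc.trans_eq (Finset.sum_congr rfl fun j _ => ?_)
    push_cast [map_mul]
    simp only [hY, ha, map_mul]
    ring
  have hYb : ∀ i j, i ≠ j → Y j ≤ b * Y i := key_ineq a b hbub ha2 Y hYpos hYineq
  -- bound on embeddings of w0
  have hw0bd : ∀ j, σ j ((w0 : 𝓞 K) : K) ≤ (d : ℝ) * b := by
    intro j
    have h1 : Y j ≤ ∑ i, Y i :=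
      Finset.single_le_sum (f := Y) (fun i _ => (hYpos i).le) (Finset.mem_univ j)
    have h2 : ∑ i, Y i < ∑ i, X i := by
      rw [← trsum, ← trsum]; exact_mod_cast hw0lt
    have h3 : ∑ i, X i ≤ (d : ℝ) * (b * X j) := by
      calc ∑ i, X i ≤ ∑ _i : Fin d, b * X j := by
            refine Finset.sum_le_sum fun i _ => ?_
            rcases eq_or_ne j i with rfl | hne
            · nlinarith [hXpos j]
            · exact hxb j i hne
        _ = (d : ℝ) * (b * X j) := by
            rw [Finset.sum_const, Finset.card_univ, Fintype.card_fin, nsmul_eq_mul]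
    have h4 : σ j ((w0 : 𝓞 K) : K) * X j < (d : ℝ) * b * X j := by
      have : Y j < (d : ℝ) * (b * X j) := lt_of_le_of_lt h1 (lt_of_lt_of_le h2 h3)
      rw [hY] at this
      simp only [map_mul] at this
      calc σ j ((w0 : 𝓞 K) : K) * X j = σ j ((w0 : 𝓞 K) : K) * σ j x := rfl
        _ < (d : ℝ) * (b * X j) := this
        _ = (d : ℝ) * b * X j := by ring
    exact ((mul_lt_mul_iff_left₀ (hXpos j)).mp h4).le
  exact absurd (hxS w0 hw0pos hw0bd) (not_le.mpr hw0lt)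
end

section
/- Let K be a totally real number field of degree d ≥ 2. Then there exists a finite set S′ of totally positive units of O_K such that every element x ∈ K (totally positive or not) that is not trace-minimal satisfies tr(ux) < tr(x) for some u ∈ S′. -/
open NumberField Finset


section aux
variable (K : Type*) [Field K] [NumberField K] (d : ℕ)
  (σ : Fin d → (K →+* ℝ))

lemma aux_bij (hσ : Function.Injective σ) (hd : d = Module.finrank ℚ K) :
    Function.Bijective (fun i => Complex.ofRealHom.comp (σ i)) := by
  rw [Fintype.bijective_iff_injective_and_card]
  constructor
  · intro i j h
    apply hσ
    ext x
    have := RingHom.congr_fun h x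
    simpa using this
  · rw [Fintype.card_fin, NumberField.Embeddings.card K ℂ, hd]

lemma aux_trace (hσ : Function.Injective σ) (hd : d = Module.finrank ℚ K) (y : K) :
    ((Algebra.trace ℚ K y : ℚ) : ℝ) = ∑ i, σ i y := by
  have hb := aux_bij K d σ hσ hd
  have h1 : (algebraMap ℚ ℂ) (Algebra.trace ℚ K y) = ∑ φ : K →ₐ[ℚ] ℂ, φ y :=
    trace_eq_sum_embeddings ℂ
  have h2 : ∑ φ : K →ₐ[ℚ] ℂ, φ y = ∑ ψ : K →+* ℂ, ψ y := by
    refine (Fintype.sum_equiv (RingHom.equivRatAlgHom K ℂ) (fun ψ => ψ y) (fun φ => φ y) ?_).symm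
    intro ψ; rfl
  have h3 : ∑ ψ : K →+* ℂ, ψ y = ∑ i, (Complex.ofRealHom.comp (σ i)) y :=
    (Fintype.sum_bijective _ hb (fun i => (Complex.ofRealHom.comp (σ i)) y) (fun ψ => ψ y)
      (fun i => rfl)).symm
  have h4 : ((Algebra.trace ℚ K y : ℚ) : ℂ) = (((∑ i, σ i y : ℝ)) : ℂ) := by
    rw [← eq_ratCast (algebraMap ℚ ℂ), h1, h2, h3]
    push_cast
    rfl
  exact_mod_cast h4

lemma aux_norm (hσ : Function.Injective σ) (hd : d = Module.finrank ℚ K) (y : K) :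
    ((Algebra.norm ℚ y : ℚ) : ℝ) = ∏ i, σ i y := by
  have hb := aux_bij K d σ hσ hd
  have h1 : (algebraMap ℚ ℂ) (Algebra.norm ℚ y) = ∏ φ : K →ₐ[ℚ] ℂ, φ y :=
    Algebra.norm_eq_prod_embeddings ℚ ℂ y
  have h2 : ∏ φ : K →ₐ[ℚ] ℂ, φ y = ∏ ψ : K →+* ℂ, ψ y := by
    refine (Fintype.prod_equiv (RingHom.equivRatAlgHom K ℂ) (fun ψ => ψ y) (fun φ => φ y) ?_).symm
    intro ψ; rfl
  have h3 : ∏ ψ : K →+* ℂ, ψ y = ∏ i, (Complex.ofRealHom.comp (σ i)) y :=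
    (Fintype.prod_bijective _ hb (fun i => (Complex.ofRealHom.comp (σ i)) y) (fun ψ => ψ y)
      (fun i => rfl)).symm
  have h4 : ((Algebra.norm ℚ y : ℚ) : ℂ) = (((∏ i, σ i y : ℝ)) : ℂ) := by
    rw [← eq_ratCast (algebraMap ℚ ℂ), h1, h2, h3]
    push_cast
    rfl
  exact_mod_cast h4

end aux

section aux2
variable (K : Type*) [Field K] [NumberField K] (d : ℕ)
  (σ : Fin d → (K →+* ℝ))

lemma aux_real (i : Fin d) : ComplexEmbedding.IsReal (Complex.ofRealHom.comp (σ i)) := by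
  rw [ComplexEmbedding.isReal_iff]
  ext x
  simp [ComplexEmbedding.conjugate_coe_eq, Complex.conj_ofReal]

lemma aux_pi_inj (hσ : Function.Injective σ) :
    Function.Injective (fun i => InfinitePlace.mk (Complex.ofRealHom.comp (σ i))) := by
  intro i j h
  simp only [InfinitePlace.mk_eq_iff] at h
  rw [ComplexEmbedding.isReal_iff.mp (aux_real K d σ i), or_self] at h
  apply hσ
  ext x
  have := RingHom.congr_fun h x
  simpa using this

lemma aux_pi_surj (hσ : Function.Injective σ) (hd : d = Module.finrank ℚ K) :
    Function.Surjective (fun i => InfinitePlace.mk (Complex.ofRealHom.comp (σ i))) := by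
  intro w
  obtain ⟨i, hi⟩ := (aux_bij K d σ hσ hd).surjective w.embedding
  refine ⟨i, ?_⟩
  show InfinitePlace.mk (Complex.ofRealHom.comp (σ i)) = w
  rw [show Complex.ofRealHom.comp (σ i) = w.embedding from hi, InfinitePlace.mk_embedding]

lemma aux_apply (i : Fin d) (y : K) :
    (InfinitePlace.mk (Complex.ofRealHom.comp (σ i))) y = |σ i y| := by
  rw [InfinitePlace.apply]
  simp

/-- existence of a totally positive unit big at `k`, small elsewhere -/
lemma aux_unit (hd2 : 2 ≤ d) (hσ : Function.Injective σ) (hd : d = Module.finrank ℚ K)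
    (k : Fin d) :
    ∃ v : (𝓞 K)ˣ, (∀ j, 0 < σ j ((v : 𝓞 K) : K)) ∧
      (2 * d : ℝ) < σ k ((v : 𝓞 K) : K) ∧
      ∀ j, j ≠ k → σ j ((v : 𝓞 K) : K) < 1 / 2 := by
  set π := fun i => InfinitePlace.mk (Complex.ofRealHom.comp (σ i)) with hπ
  obtain ⟨u, hu⟩ := NumberField.Units.dirichletUnitTheorem.exists_unit K (π k)
  set a : Fin d → ℝ := fun j => σ j ((u : 𝓞 K) : K) with ha
  have hane : ∀ j, a j ≠ 0 := fun j => by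
    simpa [ha] using (map_ne_zero_iff (σ j) (σ j).injective).mpr (Units.coe_ne_zero u)
  have hasmall : ∀ j, j ≠ k → |a j| < 1 := by
    intro j hj
    have hne : π j ≠ π k := fun h => hj (aux_pi_inj K d σ hσ h)
    have hlog := hu (π j) hne
    have hpos : 0 < (π j) ((u : 𝓞 K) : K) :=
      InfinitePlace.pos_iff.mpr (Units.coe_ne_zero u)
    have := (Real.log_neg_iff hpos).mp ?_
    · rwa [aux_apply] at this
    · exact hlog
  have hprod : ∏ j, |a j| = 1 := by
    have h1 : ((Algebra.norm ℚ ((u : 𝓞 K) : K) : ℚ) : ℝ) = ∏ j, a j :=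
      aux_norm K d σ hσ hd _
    have h2 : |Algebra.norm ℚ ((u : 𝓞 K) : K)| = 1 := NumberField.Units.norm K u
    calc ∏ j, |a j| = |∏ j, a j| := (Finset.abs_prod _ _).symm
    _ = |((Algebra.norm ℚ ((u : 𝓞 K) : K) : ℚ) : ℝ)| := by rw [h1]
    _ = ((|Algebra.norm ℚ ((u : 𝓞 K) : K)| : ℚ) : ℝ) := by push_cast; ring
    _ = 1 := by rw [h2]; norm_num
  have habig : 1 < |a k| := by
    by_contra hle
    push_neg at hle
    have hpos : ∀ j, 0 < |a j| := fun j => abs_pos.mpr (hane j)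
    have hlt : ∏ j ∈ univ.erase k, |a j| < 1 := by
      calc ∏ j ∈ univ.erase k, |a j| < ∏ _j ∈ univ.erase k, (1 : ℝ) := by
            apply Finset.prod_lt_prod_of_nonempty
            · intro j hj; exact hpos j
            · intro j hj; exact hasmall j (Finset.mem_erase.mp hj).1
            · obtain ⟨j, hj⟩ := Fintype.exists_ne_of_one_lt_card
                (by simpa using by omega : 1 < Fintype.card (Fin d)) k
              exact ⟨j, Finset.mem_erase.mpr ⟨hj, Finset.mem_univ j⟩⟩
        _ = 1 := Finset.prod_const_one
    have : ∏ j, |a j| < 1 := by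
      rw [← Finset.prod_erase_mul univ _ (Finset.mem_univ k)]
      calc (∏ j ∈ univ.erase k, |a j|) * |a k| ≤ (∏ j ∈ univ.erase k, |a j|) * 1 := by
            apply mul_le_mul_of_nonneg_left hle (Finset.prod_nonneg fun j _ => (hpos j).le)
        _ < 1 := by rw [mul_one]; exact hlt
    rw [hprod] at this; exact lt_irrefl 1 this
  -- squares
  set b : Fin d → ℝ := fun j => (a j) ^ 2 with hb
  have hbpos : ∀ j, 0 < b j := fun j =>
    lt_of_le_of_ne (sq_nonneg _) (Ne.symm (pow_ne_zero 2 (hane j)))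
  have hbk : 1 < b k := by
    rw [hb]; simpa [sq_abs] using one_lt_pow₀ habig (two_ne_zero)
  have hbj : ∀ j, j ≠ k → b j < 1 := fun j hj => by
    rw [hb]
    calc (a j) ^ 2 = |a j| ^ 2 := (sq_abs _).symm
    _ < 1 := pow_lt_one₀ (abs_nonneg _) (hasmall j hj) two_ne_zero
  -- choose exponent
  obtain ⟨n₀, hn₀⟩ := pow_unbounded_of_one_lt (2 * d : ℝ) hbk
  have hchoice : ∀ j : Fin d, ∃ m : ℕ, j ≠ k → (b j) ^ m < 1 / 2 := by
    intro j
    by_cases hj : j = k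
    · exact ⟨0, fun h => absurd hj h⟩
    · obtain ⟨m, hm⟩ := exists_pow_lt_of_lt_one (by norm_num : (0:ℝ) < 1/2) (hbj j hj)
      exact ⟨m, fun _ => hm⟩
  choose N hN using hchoice
  set n := n₀ + Finset.univ.sup N with hn
  have hnk : (2 * d : ℝ) < (b k) ^ n := by
    calc (2 * d : ℝ) < (b k) ^ n₀ := hn₀
    _ ≤ (b k) ^ n := pow_le_pow_right₀ hbk.le (Nat.le_add_right _ _)
  have hnj : ∀ j, j ≠ k → (b j) ^ n < 1 / 2 := by
    intro j hj
    calc (b j) ^ n ≤ (b j) ^ (N j) := by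
          apply pow_le_pow_of_le_one (hbpos j).le (hbj j hj).le
          exact le_trans (Finset.le_sup (Finset.mem_univ j)) (Nat.le_add_left _ _)
    _ < 1 / 2 := hN j hj
  refine ⟨(u * u) ^ n, ?_, ?_, ?_⟩
  · intro j
    have : σ j ((((u * u) ^ n : (𝓞 K)ˣ) : 𝓞 K) : K) = (b j) ^ n := by
      push_cast
      rw [map_pow, map_mul]
      simp [hb, ha, sq]
    rw [this]; exact pow_pos (hbpos j) n
  · have : σ k ((((u * u) ^ n : (𝓞 K)ˣ) : 𝓞 K) : K) = (b k) ^ n := by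
      push_cast; rw [map_pow, map_mul]; simp [hb, ha, sq]
    rw [this]; exact hnk
  · intro j hj
    have : σ j ((((u * u) ^ n : (𝓞 K)ˣ) : 𝓞 K) : K) = (b j) ^ n := by
      push_cast; rw [map_pow, map_mul]; simp [hb, ha, sq]
    rw [this]; exact hnj j hj

end aux2
/-- Let `K` be a totally real number field of degree `d ≥ 2`.  Then there exists a finite set
`S'` of totally positive units of `O_K` such that every `x ∈ K` that is not trace-minimal
satisfies `tr(ux) < tr(x)` for some `u ∈ S'`. -/
theorem stmt4
    (K : Type*) [Field K] [NumberField K] (d : ℕ) (hd2 : 2 ≤ d)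
    (σ : Fin d → (K →+* ℝ)) (hσ : Function.Injective σ)
    (hd : d = Module.finrank ℚ K) :
    ∃ S' : Finset (𝓞 K)ˣ,
      (∀ u ∈ S', ∀ i, 0 < σ i ((u : 𝓞 K) : K)) ∧
      ∀ x : K,
        ¬ (∀ u : (𝓞 K)ˣ, (∀ i, 0 < σ i ((u : 𝓞 K) : K)) →
            Algebra.trace ℚ K x ≤ Algebra.trace ℚ K (((u : 𝓞 K) : K) * x)) →
        ∃ u ∈ S', Algebra.trace ℚ K (((u : 𝓞 K) : K) * x) < Algebra.trace ℚ K x := by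
  classical
  have hd0 : 0 < d := by omega
  have hne : (Finset.univ : Finset (Fin d)).Nonempty := ⟨⟨0, hd0⟩, Finset.mem_univ _⟩
  have hd2R : (2 : ℝ) ≤ (d : ℝ) := by exact_mod_cast hd2
  choose r hrpos hrbig hrsmall using fun k => aux_unit K d σ hd2 hσ hd k
  set C := Finset.univ.sup' hne (fun k => σ k ((r k : 𝓞 K) : K)) with hC
  have hCk : ∀ k, σ k ((r k : 𝓞 K) : K) ≤ C := fun k => by
    rw [hC]
    exact Finset.le_sup' (f := fun k => σ k ((r k : 𝓞 K) : K)) (Finset.mem_univ k)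
  have hC0 : 0 < C := lt_of_lt_of_le (lt_trans (by positivity) (hrbig ⟨0, hd0⟩)) (hCk ⟨0, hd0⟩)
  -- the finite set of small totally positive units
  set setU : Set (𝓞 K)ˣ :=
    {v | (∀ i, 0 < σ i ((v : 𝓞 K) : K)) ∧ ∀ i, σ i ((v : 𝓞 K) : K) ≤ 4 * C} with hsetU
  have hcoeinj : Function.Injective (fun v : (𝓞 K)ˣ => ((v : 𝓞 K) : K)) := by
    intro v w h
    exact Units.ext (NumberField.RingOfIntegers.coe_injective h)
  have hUfin : setU.Finite := by
    have hfin := NumberField.Embeddings.finite_of_norm_le K ℂ (4 * C)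
    refine Set.Finite.subset (Set.Finite.preimage hcoeinj.injOn hfin) ?_
    intro v hv
    refine ⟨NumberField.RingOfIntegers.isIntegral_coe _, fun φ => ?_⟩
    obtain ⟨i, hi⟩ := (aux_bij K d σ hσ hd).surjective φ
    have : φ ((v : 𝓞 K) : K) = ((σ i ((v : 𝓞 K) : K) : ℝ) : ℂ) := by
      rw [← hi]; rfl
    rw [this, Complex.norm_real, Real.norm_eq_abs, abs_of_pos (hv.1 i)]
    exact hv.2 i
  refine ⟨hUfin.toFinset ∪ Finset.image r Finset.univ, ?_, ?_⟩
  · intro u hu i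
    rcases Finset.mem_union.mp hu with h | h
    · exact (hUfin.mem_toFinset.mp h).1 i
    · obtain ⟨k, _, rfl⟩ := Finset.mem_image.mp h
      exact hrpos k i
  · intro x hx
    push_neg at hx
    obtain ⟨u₀, hu₀pos, hu₀lt⟩ := hx
    have hgoal : ∀ v : (𝓞 K)ˣ, (∑ i, σ i ((v : 𝓞 K) : K) * σ i x) < ∑ i, σ i x →
        Algebra.trace ℚ K (((v : 𝓞 K) : K) * x) < Algebra.trace ℚ K x := by
      intro v hv
      rw [← Rat.cast_lt (K := ℝ), aux_trace K d σ hσ hd, aux_trace K d σ hσ hd]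
      simpa [map_mul] using hv
    have hu₀R : (∑ i, σ i ((u₀ : 𝓞 K) : K) * σ i x) < ∑ i, σ i x := by
      have h := hu₀lt
      rw [← Rat.cast_lt (K := ℝ), aux_trace K d σ hσ hd, aux_trace K d σ hσ hd] at h
      simpa [map_mul] using h
    have hx0 : x ≠ 0 := by
      rintro rfl
      rw [mul_zero] at hu₀lt
      exact lt_irrefl _ hu₀lt
    by_cases hneg : ∃ j, σ j x < 0
    · -- some negative coordinate
      obtain ⟨j₀, hj₀⟩ := hneg
      have hNne : (Finset.univ.filter (fun j => σ j x < 0)).Nonempty :=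
        ⟨j₀, by simp [hj₀]⟩
      obtain ⟨k, hkN, hkmax⟩ := Finset.exists_max_image _ (fun j => |σ j x|) hNne
      have hk : σ k x < 0 := (Finset.mem_filter.mp hkN).2
      refine ⟨r k, Finset.mem_union_right _ (Finset.mem_image_of_mem r (Finset.mem_univ k)), ?_⟩
      apply hgoal
      have key : ∑ j, (σ j ((r k : 𝓞 K) : K) * σ j x - σ j x) < 0 := by
        have hsplit : ∑ j, (σ j ((r k : 𝓞 K) : K) * σ j x - σ j x)
            = (σ k ((r k : 𝓞 K) : K) * σ k x - σ k x)
              + ∑ j ∈ Finset.univ.erase k, (σ j ((r k : 𝓞 K) : K) * σ j x - σ j x) :=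
          (Finset.add_sum_erase _ _ (Finset.mem_univ k)).symm
        have hbound : ∀ j ∈ Finset.univ.erase k,
            σ j ((r k : 𝓞 K) : K) * σ j x - σ j x ≤ |σ k x| := by
          intro j hj
          have hjk : j ≠ k := (Finset.mem_erase.mp hj).1
          have h1 : 0 < σ j ((r k : 𝓞 K) : K) := hrpos k j
          have h2 : σ j ((r k : 𝓞 K) : K) < 1 / 2 := hrsmall k j hjk
          rcases le_or_gt 0 (σ j x) with h | h
          · nlinarith [abs_nonneg (σ k x)]
          · have h3 : |σ j x| ≤ |σ k x| :=
              hkmax j (Finset.mem_filter.mpr ⟨Finset.mem_univ j, h⟩)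
            rw [abs_of_neg h] at h3
            nlinarith
        have hcard : (((Finset.univ.erase k).card : ℕ) : ℝ) = (d : ℝ) - 1 := by
          rw [Finset.card_erase_of_mem (Finset.mem_univ k)]
          rw [Nat.cast_sub (by simp; omega)]
          simp
        have hsum2 : ∑ j ∈ Finset.univ.erase k, (σ j ((r k : 𝓞 K) : K) * σ j x - σ j x)
            ≤ ((d : ℝ) - 1) * |σ k x| := by
          calc ∑ j ∈ Finset.univ.erase k, (σ j ((r k : 𝓞 K) : K) * σ j x - σ j x)
              ≤ (Finset.univ.erase k).card • |σ k x| :=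
                Finset.sum_le_card_nsmul _ _ _ hbound
          _ = ((d : ℝ) - 1) * |σ k x| := by rw [nsmul_eq_mul, hcard]
        have hterm : σ k ((r k : 𝓞 K) : K) * σ k x - σ k x ≤ (2 * (d : ℝ) - 1) * σ k x := by
          have hb := hrbig k
          nlinarith
        have habs : |σ k x| = - σ k x := abs_of_neg hk
        have hdtk : (d : ℝ) * σ k x < 0 :=
          mul_neg_of_pos_of_neg (by exact_mod_cast hd0) hk
        rw [habs] at hsum2
        rw [hsplit]
        linarith
      rw [Finset.sum_sub_distrib] at key
      linarith
    · -- all coordinates positive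
      push_neg at hneg
      have htpos : ∀ j, 0 < σ j x := by
        intro j
        rcases (hneg j).lt_or_eq with h | h
        · exact h
        · exact absurd (((map_ne_zero_iff (σ j) (σ j).injective).mpr hx0)) (by rw [← h]; simp)
      have hT : 0 < ∑ i, σ i x := Finset.sum_pos (fun i _ => htpos i) hne
      by_cases hbig : ∀ i, (∑ j, σ j x) ≤ 4 * σ i ((r i : 𝓞 K) : K) * σ i x
      · -- detected by u₀ itself, which lies in the finite small set
        refine ⟨u₀, ?_, hgoal u₀ hu₀R⟩
        apply Finset.mem_union_left
        rw [Set.Finite.mem_toFinset]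
        refine ⟨hu₀pos, fun i => ?_⟩
        have h1 : σ i ((u₀ : 𝓞 K) : K) * σ i x ≤ ∑ j, σ j ((u₀ : 𝓞 K) : K) * σ j x :=
          Finset.single_le_sum (fun j _ => mul_nonneg (hu₀pos j).le (htpos j).le)
            (Finset.mem_univ i)
        have h2 := hbig i
        have h3 : σ i ((r i : 𝓞 K) : K) ≤ C := hCk i
        have h5 : 4 * σ i ((r i : 𝓞 K) : K) * σ i x ≤ 4 * C * σ i x := by
          nlinarith [mul_le_mul_of_nonneg_right h3 (htpos i).le]
        have h4 : σ i ((u₀ : 𝓞 K) : K) * σ i x < 4 * C * σ i x := by linarith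
        exact (lt_of_mul_lt_mul_right h4 (htpos i).le).le
      · push_neg at hbig
        obtain ⟨i₀, hi₀⟩ := hbig
        refine ⟨r i₀,
          Finset.mem_union_right _ (Finset.mem_image_of_mem r (Finset.mem_univ i₀)), ?_⟩
        apply hgoal
        have hsplit : ∑ j, σ j ((r i₀ : 𝓞 K) : K) * σ j x
            = σ i₀ ((r i₀ : 𝓞 K) : K) * σ i₀ x
              + ∑ j ∈ Finset.univ.erase i₀, σ j ((r i₀ : 𝓞 K) : K) * σ j x :=
          (Finset.add_sum_erase _ _ (Finset.mem_univ i₀)).symm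
        have h1 : σ i₀ ((r i₀ : 𝓞 K) : K) * σ i₀ x < (∑ j, σ j x) / 4 := by linarith
        have h2 : ∑ j ∈ Finset.univ.erase i₀, σ j ((r i₀ : 𝓞 K) : K) * σ j x
            ≤ ∑ j ∈ Finset.univ.erase i₀, (1 / 2) * σ j x := by
          refine Finset.sum_le_sum fun j hj => ?_
          exact mul_le_mul_of_nonneg_right (hrsmall i₀ j (Finset.mem_erase.mp hj).1).le
            (htpos j).le
        have h3 : ∑ j ∈ Finset.univ.erase i₀, (1 / 2 : ℝ) * σ j x
            = (1 / 2) * ∑ j ∈ Finset.univ.erase i₀, σ j x := (Finset.mul_sum _ _ _).symm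
        have h4 : ∑ j ∈ Finset.univ.erase i₀, σ j x ≤ ∑ j, σ j x :=
          Finset.sum_le_sum_of_subset_of_nonneg (Finset.subset_univ _)
            (fun j _ _ => (htpos j).le)
        rw [hsplit]
        linarith
end

section
/- Let K be a totally real number field of degree d ≥ 2, and identify K ⊗_ℚ ℝ with ℝ^d via the embedding σ = (σ_1, …, σ_d). If x ∈ ℝ^d is nonzero and satisfies Σ_i σ_i(u) x_i ≥ Σ_i x_i for every totally positive unit u of O_K, then x_i > 0 for all i; that is, every nonzero trace-minimal point of ℝ^d lies in the open positive orthant. -/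
open NumberField

open Finset in
/-- For each index `j`, there is a totally positive unit `v` with `σ j v > 1` and
`σ i v < 1` for all `i ≠ j`. -/
lemma key_unit (K : Type*) [Field K] [NumberField K] (d : ℕ) (hd2 : 2 ≤ d)
    (σ : Fin d → (K →+* ℝ)) (hσ : Function.Injective σ) (j : Fin d) :
    ∃ v : (𝓞 K)ˣ, (∀ i, 0 < σ i ((v : 𝓞 K) : K)) ∧ 1 < σ j ((v : 𝓞 K) : K) ∧
      ∀ i, i ≠ j → σ i ((v : 𝓞 K) : K) < 1 := by
  classical
  set φ : Fin d → (K →+* ℂ) := fun i => Complex.ofRealHom.comp (σ i) with hφ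
  have hconj : ∀ i, ComplexEmbedding.conjugate (φ i) = φ i := by
    intro i; ext x
    simpa [φ, ComplexEmbedding.conjugate_coe_eq] using Complex.conj_ofReal (σ i x)
  set w : Fin d → InfinitePlace K := fun i => InfinitePlace.mk (φ i) with hwdef
  have hw_apply : ∀ i (y : K), w i y = |σ i y| := by
    intro i y
    rw [hwdef, InfinitePlace.apply]
    simp [φ]
  have hw_inj : Function.Injective w := by
    intro i k h
    apply hσ
    rcases InfinitePlace.mk_eq_iff.mp h with h' | h'
    · ext x; exact Complex.ofReal_injective (RingHom.congr_fun h' x)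
    · rw [hconj i] at h'
      ext x; exact Complex.ofReal_injective (RingHom.congr_fun h' x)
  obtain ⟨u, hu⟩ := NumberField.Units.dirichletUnitTheorem.exists_unit K (w j)
  have hu0 : ((u : 𝓞 K) : K) ≠ 0 := NumberField.Units.coe_ne_zero u
  have hupos : ∀ w' : InfinitePlace K, 0 < w' ((u : 𝓞 K) : K) :=
    fun w' => InfinitePlace.pos_iff.mpr hu0
  have hult : ∀ w' : InfinitePlace K, w' ≠ w j → w' ((u : 𝓞 K) : K) < 1 :=
    fun w' h => (Real.log_neg_iff (hupos w')).mp (hu w' h)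
  obtain ⟨k, hk⟩ : ∃ k : Fin d, k ≠ j := by
    have : Nontrivial (Fin d) := Fin.nontrivial_iff_two_le.mpr hd2
    exact exists_ne j
  have hprod : ∏ w' : InfinitePlace K,
      (w' ((u : 𝓞 K) : K)) ^ (InfinitePlace.mult w') = 1 := by
    rw [InfinitePlace.prod_eq_abs_norm, NumberField.Units.norm, Rat.cast_one]
  have h1lt : 1 < w j ((u : 𝓞 K) : K) := by
    by_contra hle
    push_neg at hle
    have hsplit := Finset.mul_prod_erase Finset.univ
      (fun w' => (w' ((u : 𝓞 K) : K)) ^ (InfinitePlace.mult w')) (Finset.mem_univ (w k))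
    have h2 : ∏ w' ∈ Finset.univ.erase (w k),
        (w' ((u : 𝓞 K) : K)) ^ (InfinitePlace.mult w') ≤ 1 := by
      apply Finset.prod_le_one
      · intro w' _; positivity
      · intro w' _
        by_cases hw' : w' = w j
        · subst hw'; exact pow_le_one₀ (hupos _).le hle
        · exact pow_le_one₀ (hupos _).le (hult w' hw').le
    have h3 : (w k ((u : 𝓞 K) : K)) ^ (InfinitePlace.mult (w k)) < 1 :=
      pow_lt_one₀ (hupos _).le (hult (w k) (fun hh => hk (hw_inj hh)))
        InfinitePlace.mult_ne_zero
    have h4 : (0:ℝ) ≤ (w k ((u : 𝓞 K) : K)) ^ (InfinitePlace.mult (w k)) := by positivity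
    nlinarith [hprod, hsplit]
  have hσu0 : ∀ i, σ i ((u : 𝓞 K) : K) ≠ 0 := fun i => by
    simpa using (map_ne_zero (σ i)).mpr hu0
  have hcoe : ∀ i, σ i (((u * u : (𝓞 K)ˣ) : 𝓞 K) : K)
      = σ i ((u : 𝓞 K) : K) * σ i ((u : 𝓞 K) : K) := by
    intro i
    rw [Units.val_mul]
    push_cast
    rw [map_mul]
  refine ⟨u * u, ?_, ?_, ?_⟩
  · intro i
    rw [hcoe i]
    exact mul_self_pos.mpr (hσu0 i)
  · rw [hcoe j, ← abs_mul_abs_self]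
    rw [hw_apply j] at h1lt
    nlinarith
  · intro i hij
    have hlt : |σ i ((u : 𝓞 K) : K)| < 1 := by
      rw [← hw_apply i]
      exact hult (w i) (fun hh => hij (hw_inj hh))
    rw [hcoe i, ← abs_mul_abs_self]
    nlinarith [abs_nonneg (σ i ((u : 𝓞 K) : K))]

/-- Let `K` be totally real of degree `d ≥ 2`, identified with `ℝ^d` via the real embeddings.
Every nonzero trace-minimal point of `ℝ^d` lies in the open positive orthant. -/
theorem stmt6
    (K : Type*) [Field K] [NumberField K] (d : ℕ) (hd2 : 2 ≤ d)
    (σ : Fin d → (K →+* ℝ)) (hσ : Function.Injective σ)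
    (hd : d = Module.finrank ℚ K)
    (x : Fin d → ℝ) (hx0 : x ≠ 0)
    (hmin : ∀ u : (𝓞 K)ˣ, (∀ i, 0 < σ i ((u : 𝓞 K) : K)) →
      ∑ i, x i ≤ ∑ i, σ i ((u : 𝓞 K) : K) * x i) :
    ∀ i, 0 < x i := by
  classical
  have hnonneg : ∀ i, 0 ≤ x i := by
    intro j
    by_contra hneg
    push_neg at hneg
    obtain ⟨v, hvpos, hvj, hvlt⟩ := key_unit K d hd2 σ hσ j
    set a : ℝ := σ j ((v : 𝓞 K) : K) with ha
    obtain ⟨n, hn⟩ := pow_unbounded_of_one_lt ((∑ i, |x i| - ∑ i, x i) / (-x j)) hvj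
    have hxjpos : (0:ℝ) < -x j := by linarith
    have hstep : ∑ i, |x i| - ∑ i, x i < a ^ n * (-x j) := (div_lt_iff₀ hxjpos).mp hn
    have hkey : a ^ n * x j < ∑ i, x i - ∑ i, |x i| := by nlinarith
    have hcoe : ∀ i, σ i (((v ^ n : (𝓞 K)ˣ) : 𝓞 K) : K) = (σ i ((v : 𝓞 K) : K)) ^ n := by
      intro i
      rw [Units.val_pow_eq_pow_val]
      push_cast
      rw [map_pow]
    have hpospow : ∀ i, 0 < σ i (((v ^ n : (𝓞 K)ˣ) : 𝓞 K) : K) := by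
      intro i; rw [hcoe i]; exact pow_pos (hvpos i) n
    have hm := hmin (v ^ n) hpospow
    have hsum : ∑ i, σ i (((v ^ n : (𝓞 K)ˣ) : 𝓞 K) : K) * x i
        = (a ^ n) * x j + ∑ i ∈ Finset.univ.erase j, (σ i ((v : 𝓞 K) : K)) ^ n * x i := by
      simp_rw [hcoe]
      exact (Finset.add_sum_erase _ (fun i => (σ i ((v : 𝓞 K) : K)) ^ n * x i)
        (Finset.mem_univ j)).symm
    have hbound : ∑ i ∈ Finset.univ.erase j, (σ i ((v : 𝓞 K) : K)) ^ n * x i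
        ≤ ∑ i, |x i| := by
      calc ∑ i ∈ Finset.univ.erase j, (σ i ((v : 𝓞 K) : K)) ^ n * x i
          ≤ ∑ i ∈ Finset.univ.erase j, |x i| := by
            refine Finset.sum_le_sum fun i hi => ?_
            have hij : i ≠ j := (Finset.mem_erase.mp hi).1
            have hp : 0 < σ i ((v : 𝓞 K) : K) := hvpos i
            have hpl : (σ i ((v : 𝓞 K) : K)) ^ n ≤ 1 :=
              pow_le_one₀ hp.le (hvlt i hij).le
            calc (σ i ((v : 𝓞 K) : K)) ^ n * x i
                ≤ (σ i ((v : 𝓞 K) : K)) ^ n * |x i| :=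
                  mul_le_mul_of_nonneg_left (le_abs_self _) (pow_nonneg hp.le n)
              _ ≤ 1 * |x i| := mul_le_mul_of_nonneg_right hpl (abs_nonneg _)
              _ = |x i| := one_mul _
        _ ≤ ∑ i, |x i| := Finset.sum_le_sum_of_subset_of_nonneg
            (Finset.erase_subset _ _) (fun i _ _ => abs_nonneg _)
    rw [hsum] at hm
    linarith
  intro j
  rcases (hnonneg j).lt_or_eq with h | h
  · exact h
  · exfalso
    obtain ⟨k, hxk⟩ : ∃ k, x k ≠ 0 := Function.ne_iff.mp hx0
    have hxkpos : 0 < x k := (hnonneg k).lt_of_ne (Ne.symm hxk)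
    have hkj : k ≠ j := by
      intro e
      exact hxk (by rw [e, ← h])
    obtain ⟨v, hvpos, hvj, hvlt⟩ := key_unit K d hd2 σ hσ j
    have hm := hmin v hvpos
    have hlt : ∑ i, σ i ((v : 𝓞 K) : K) * x i < ∑ i, x i := by
      refine Finset.sum_lt_sum (fun i _ => ?_) ⟨k, Finset.mem_univ k, ?_⟩
      · by_cases hij : i = j
        · subst hij
          rw [← h, mul_zero]
        · exact mul_le_of_le_one_left (hnonneg i) (hvlt i hij).le
      · exact mul_lt_of_lt_one_left hxkpos (hvlt k hkj)
    linarith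
end

section
/- Let K be a totally real number field, I a fractional ideal of K, and let v_1, …, v_m ∈ K be totally positive trace-minimal elements such that every totally positive trace-minimal element y ∈ K can be written as y = Σ_{i=1}^m c_i v_i with real coefficients c_i ≥ 0. Then a totally positive element x ∈ I is an I-reducer if and only if tr(x v_i) < (min I)·tr(v_i) for some i. -/
open NumberField
open scoped nonZeroDivisors

/-- `y` is trace-minimal: `tr(uy) ≥ tr(y)` for every totally positive unit `u`. -/
def TraceMin (K : Type*) [Field K] [NumberField K] {d : ℕ}
    (σ : Fin d → (K →+* ℝ)) (y : K) : Prop :=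
  ∀ u : (𝓞 K)ˣ, (∀ i, 0 < σ i ((u : 𝓞 K) : K)) →
    Algebra.trace ℚ K y ≤ Algebra.trace ℚ K (((u : 𝓞 K) : K) * y)

theorem trace_eq_sum_sigma (K : Type*) [Field K] [NumberField K] (d : ℕ)
    (σ : Fin d → (K →+* ℝ)) (hσ : Function.Injective σ)
    (hd : d = Module.finrank ℚ K) (y : K) :
    ((Algebra.trace ℚ K y : ℚ) : ℝ) = ∑ j, σ j y := by
  set e : Fin d → (K →ₐ[ℚ] ℂ) := fun j => RingHom.equivRatAlgHom K ℂ (Complex.ofRealHom.comp (σ j)) with he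
  have hinj : Function.Injective e := by
    intro a b hab
    apply hσ
    have := (RingHom.equivRatAlgHom K ℂ).injective hab
    ext z
    have := congrArg (fun f => f z) this
    simpa using Complex.ofReal_injective this
  have hbij : Function.Bijective e :=
    (Fintype.bijective_iff_injective_and_card e).2 ⟨hinj, by
      rw [AlgHom.card, Fintype.card_fin, hd]⟩
  have h1 : algebraMap ℚ ℂ (Algebra.trace ℚ K y) = ∑ τ : K →ₐ[ℚ] ℂ, τ y :=
    trace_eq_sum_embeddings ℂ
  rw [← hbij.sum_comp (fun τ => τ y)] at h1
  apply Complex.ofReal_injective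
  push_cast
  rw [show ((Algebra.trace ℚ K y : ℚ) : ℂ) = algebraMap ℚ ℂ (Algebra.trace ℚ K y) by norm_cast, h1]
  simp [he, RingHom.equivRatAlgHom]

/-- Let `v 1, …, v n` be totally positive trace-minimal elements of `K` such that every
totally positive trace-minimal element is a nonnegative real combination of them (in
`K ⊗ ℝ ≅ ℝ^d`).  Then a totally positive `x ∈ I` is an `I`-reducer if and only if
`tr(x vᵢ) < (min I)·tr(vᵢ)` for some `i`. -/
theorem stmt8
    (K : Type*) [Field K] [NumberField K] (d : ℕ)
    (σ : Fin d → (K →+* ℝ)) (hσ : Function.Injective σ)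
    (hd : d = Module.finrank ℚ K)
    (I : FractionalIdeal (𝓞 K)⁰ K) (m : ℚ)
    (hm : IsLeast {r : ℚ | 0 < r ∧ algebraMap ℚ K r ∈ I} m)
    (n : ℕ) (v : Fin n → K)
    (hvpos : ∀ i j, 0 < σ j (v i))
    (hvmin : ∀ i, TraceMin K σ (v i))
    (hspan : ∀ y : K, (∀ j, 0 < σ j y) → TraceMin K σ y →
      ∃ c : Fin n → ℝ, (∀ i, 0 ≤ c i) ∧ ∀ j, σ j y = ∑ i, c i * σ j (v i))
    (x : K) (hxI : x ∈ I) (hxpos : ∀ j, 0 < σ j x) :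
    (∃ y : K, (∀ j, 0 < σ j y) ∧ TraceMin K σ y ∧
        Algebra.trace ℚ K (x * y) < m * Algebra.trace ℚ K y) ↔
      ∃ i, Algebra.trace ℚ K (x * v i) < m * Algebra.trace ℚ K (v i) := by
  have htr := trace_eq_sum_sigma K d σ hσ hd
  constructor
  · rintro ⟨y, hypos, hymin, hlt⟩
    obtain ⟨c, hc0, hcy⟩ := hspan y hypos hymin
    have h1 : ((Algebra.trace ℚ K (x * y) : ℚ) : ℝ)
        = ∑ i, c i * ((Algebra.trace ℚ K (x * v i) : ℚ) : ℝ) := by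
      rw [htr]
      simp only [htr, map_mul, Finset.mul_sum]
      rw [Finset.sum_comm]
      apply Finset.sum_congr rfl
      intro j _
      rw [hcy j, Finset.mul_sum]
      apply Finset.sum_congr rfl
      intro i _
      ring
    have h2 : ((Algebra.trace ℚ K y : ℚ) : ℝ)
        = ∑ i, c i * ((Algebra.trace ℚ K (v i) : ℚ) : ℝ) := by
      rw [htr]
      simp only [htr, Finset.mul_sum]
      rw [Finset.sum_comm]
      apply Finset.sum_congr rfl
      intro j _
      rw [hcy j]
    have hltR : ((Algebra.trace ℚ K (x * y) : ℚ) : ℝ)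
        < (m : ℝ) * ((Algebra.trace ℚ K y : ℚ) : ℝ) := by exact_mod_cast hlt
    rw [h1, h2, Finset.mul_sum] at hltR
    obtain ⟨i, -, hi⟩ := Finset.exists_lt_of_sum_lt hltR
    have hci : 0 < c i := by
      rcases (hc0 i).lt_or_eq with h | h
      · exact h
      · exfalso; rw [← h] at hi; simp at hi
    refine ⟨i, ?_⟩
    have : ((Algebra.trace ℚ K (x * v i) : ℚ) : ℝ)
        < (m : ℝ) * ((Algebra.trace ℚ K (v i) : ℚ) : ℝ) := by
      have := hi
      nlinarith
    exact_mod_cast this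
  · rintro ⟨i, hi⟩
    exact ⟨v i, hvpos i, hvmin i, hi⟩
end

section
/- Let K be a totally real number field of degree d ≥ 2 with real embeddings σ_1, …, σ_d. (a) For every nonempty proper subset R of {1, …, d} there exists a totally positive unit u of O_K with σ_i(u) > 1 for all i ∈ R and σ_i(u) < 1 for all i ∉ R. (b) For every index i and every real C > 0 there exists a totally positive unit v of O_K with σ_i(v) > C. -/
open NumberField

open NumberField.InfinitePlace NumberField.Units NumberField.Units.dirichletUnitTheorem in
/-- Approximation lemma: for any target vector `y` and any `ε > 0`, there is a unit whose
log embedding is within `t * ε` (coordinatewise) of `t • y` for some `t > 0`. -/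
lemma stmt16_aux_latt {K : Type*} [Field K] [NumberField K]
    (y : {w : InfinitePlace K // w ≠ w₀} → ℝ) {ε : ℝ} (hε : 0 < ε) :
    ∃ (u : (𝓞 K)ˣ) (t : ℝ), 0 < t ∧
      ∀ w, |logEmbedding K (Additive.ofMul u) w - t * y w| < t * ε := by
  classical
  set L := unitLattice K
  have : DiscreteTopology L := inferInstance
  let b : Module.Basis _ ℝ ({w : InfinitePlace K // w ≠ w₀} → ℝ) :=
    (basisUnitLattice K).ofZLatticeBasis ℝ L
  obtain ⟨M, hM⟩ := isBounded_iff_forall_norm_le.mp (ZSpan.fundamentalDomain_isBounded b)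
  obtain ⟨N, hN⟩ := exists_nat_gt (max 0 (M / ε))
  have hN0 : (0 : ℝ) < N := lt_of_le_of_lt (le_max_left _ _) hN
  have hMN : M < N * ε := by
    have h1 : M / ε < N := lt_of_le_of_lt (le_max_right _ _) hN
    calc M = (M / ε) * ε := by field_simp
    _ < N * ε := by exact mul_lt_mul_of_pos_right h1 hε
  set x : {w : InfinitePlace K // w ≠ w₀} → ℝ := (N : ℝ) • y with hx
  have hspan : Submodule.span ℤ (Set.range ⇑b) ≤ L :=
    le_of_eq ((basisUnitLattice K).ofZLatticeBasis_span ℝ)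
  have hfloor : ((ZSpan.floor b x : _) : {w : InfinitePlace K // w ≠ w₀} → ℝ) ∈ L :=
    hspan (ZSpan.floor b x).2
  obtain ⟨a, -, ha⟩ := hfloor
  refine ⟨a.toMul, (N : ℝ), hN0, fun w => ?_⟩
  have hfr : ZSpan.fract b x = x - (ZSpan.floor b x : _) := ZSpan.fract_apply b x
  have hnorm : ‖ZSpan.fract b x‖ ≤ M := hM _ (ZSpan.fract_mem_fundamentalDomain b x)
  have hcoord : |ZSpan.fract b x w| ≤ M := by
    have h := norm_le_pi_norm (ZSpan.fract b x) w
    rw [Real.norm_eq_abs] at h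
    exact le_trans h hnorm
  have hofmul : Additive.ofMul a.toMul = a := rfl
  have ha' : logEmbedding K a = ((ZSpan.floor b x : _) : {w : InfinitePlace K // w ≠ w₀} → ℝ) := ha
  have : logEmbedding K (Additive.ofMul a.toMul) w - (N : ℝ) * y w
      = -(ZSpan.fract b x w) := by
    rw [hofmul, ha', hfr]
    simp [hx, mul_comm]
  rw [this, abs_neg]
  exact lt_of_le_of_lt hcoord hMN

open NumberField.InfinitePlace NumberField.Units NumberField.Units.dirichletUnitTheorem in
/-- Sign lemma, special case where the distinguished place is outside `S`. -/
lemma stmt16_aux_sign {K : Type*} [Field K] [NumberField K]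
    (S : Finset (InfinitePlace K)) (hS : S.Nonempty) (hw0 : (w₀ : InfinitePlace K) ∉ S) :
    ∃ u : (𝓞 K)ˣ, (∀ w ∈ S, 1 < w ((u : 𝓞 K) : K)) ∧
      (∀ w ∉ S, w ((u : 𝓞 K) : K) < 1) := by
  classical
  set n : ℕ := Fintype.card (InfinitePlace K) with hn
  set ε : ℝ := 1 / (4 * (n + 1)) with hε
  have hε0 : 0 < ε := by positivity
  have hε1 : ε < 1 := by
    rw [hε]
    rw [div_lt_one (by positivity)]
    have : (0 : ℝ) ≤ (n : ℝ) := Nat.cast_nonneg n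
    nlinarith
  set y : ({w : InfinitePlace K // w ≠ w₀} → ℝ) :=
    fun w => if (w : InfinitePlace K) ∈ S then 1 else -ε with hy
  obtain ⟨u, t, ht, hu⟩ := stmt16_aux_latt y hε0
  set Lg := logEmbedding K (Additive.ofMul u) with hLg
  -- coordinatewise sign information
  have hpos : ∀ w : {w : InfinitePlace K // w ≠ w₀}, (w : InfinitePlace K) ∈ S → 0 < Lg w := by
    intro w hw
    have h := hu w
    rw [abs_lt] at h
    have hyw : y w = 1 := by simp [hy, hw]
    nlinarith [h.1]
  have hneg : ∀ w : {w : InfinitePlace K // w ≠ w₀}, (w : InfinitePlace K) ∉ S → Lg w < 0 := by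
    intro w hw
    have h := hu w
    rw [abs_lt] at h
    have hyw : y w = -ε := by simp [hy, hw]
    nlinarith [h.2]
  -- the sum of the coordinates is positive
  obtain ⟨wS, hwS⟩ := hS
  have hwS0 : wS ≠ w₀ := fun h => hw0 (h ▸ hwS)
  set c : ℕ := Fintype.card {w : InfinitePlace K // w ≠ w₀} with hc
  have hcn : (c : ℝ) ≤ (n : ℝ) + 1 := by
    have h : c ≤ n := Fintype.card_le_of_injective (fun w => (w : InfinitePlace K))
      Subtype.coe_injective
    have h' : (c : ℝ) ≤ (n : ℝ) := by exact_mod_cast h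
    linarith
  have hsumy : 1 - ε * c ≤ ∑ w, y w := by
    have h1 : ∑ w ∈ (Finset.univ.erase (⟨wS, hwS0⟩ : {w : InfinitePlace K // w ≠ w₀})), y w ≥
        ∑ w ∈ (Finset.univ.erase (⟨wS, hwS0⟩ : {w : InfinitePlace K // w ≠ w₀})), (-ε) := by
      refine Finset.sum_le_sum fun w _ => ?_
      simp only [hy]
      by_cases hmem : (w : InfinitePlace K) ∈ S
      · rw [if_pos hmem]; linarith
      · rw [if_neg hmem]
    have hyS : y ⟨wS, hwS0⟩ = 1 := by simp [hy, hwS]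
    have hcard : ((Finset.univ.erase (⟨wS, hwS0⟩ : {w : InfinitePlace K // w ≠ w₀})).card : ℝ)
        ≤ (c : ℝ) := by
      have h := Finset.card_le_card (Finset.erase_subset
        (⟨wS, hwS0⟩ : {w : InfinitePlace K // w ≠ w₀}) Finset.univ)
      rw [Finset.card_univ] at h
      exact_mod_cast h
    have h2 : ∑ w ∈ (Finset.univ.erase (⟨wS, hwS0⟩ : {w : InfinitePlace K // w ≠ w₀})),
        (-ε : ℝ) = -(ε * (Finset.univ.erase (⟨wS, hwS0⟩ :
          {w : InfinitePlace K // w ≠ w₀})).card) := by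
      rw [Finset.sum_const, nsmul_eq_mul]
      ring
    rw [← Finset.add_sum_erase _ _ (Finset.mem_univ ⟨wS, hwS0⟩), hyS]
    rw [h2] at h1
    nlinarith [h1, mul_le_mul_of_nonneg_left hcard (le_of_lt hε0)]
  have hsumL : 0 < ∑ w, Lg w := by
    have h1 : ∀ w : {w : InfinitePlace K // w ≠ w₀}, t * y w - t * ε < Lg w := by
      intro w
      have h := hu w
      rw [abs_lt] at h
      linarith [h.1]
    have hne : Nonempty {w : InfinitePlace K // w ≠ w₀} := ⟨⟨wS, hwS0⟩⟩
    have h2 : ∑ w, (t * y w - t * ε) < ∑ w, Lg w := by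
      apply Finset.sum_lt_sum_of_nonempty
      · exact Finset.univ_nonempty
      · exact fun w _ => h1 w
    have h3 : ∑ w, (t * y w - t * ε) = t * (∑ w, y w) - t * ε * c := by
      rw [Finset.sum_sub_distrib, ← Finset.mul_sum, Finset.sum_const, Finset.card_univ,
        nsmul_eq_mul, ← hc]
      ring
    have hεc : ε * c ≤ 1 / 4 := by
      rw [hε]
      rw [div_mul_eq_mul_div, one_mul, div_le_div_iff₀ (by positivity) (by norm_num)]
      nlinarith
    have h4 : t * (1 - 2 * (ε * c)) ≤ t * (∑ w, y w) - t * ε * c := by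
      nlinarith [mul_le_mul_of_nonneg_left hsumy (le_of_lt ht)]
    nlinarith
  -- transfer to inequalities on the places
  have hulog : ∀ w : {w : InfinitePlace K // w ≠ w₀},
      Lg w = (mult (w : InfinitePlace K)) * Real.log ((w : InfinitePlace K) ((u : 𝓞 K) : K)) :=
    fun w => logEmbedding_component u w
  have hupos : ∀ w : InfinitePlace K, 0 < w ((u : 𝓞 K) : K) :=
    fun w => pos_iff.mpr (Units.coe_ne_zero u)
  have hmain : ∀ w : {w : InfinitePlace K // w ≠ w₀},
      ((w : InfinitePlace K) ∈ S → 1 < (w : InfinitePlace K) ((u : 𝓞 K) : K)) ∧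
      ((w : InfinitePlace K) ∉ S → (w : InfinitePlace K) ((u : 𝓞 K) : K) < 1) := by
    intro w
    have hm : (0 : ℝ) < mult (w : InfinitePlace K) := by exact_mod_cast mult_pos
    constructor
    · intro hw
      have h := hpos w hw
      rw [hulog w] at h
      have hlog : 0 < Real.log ((w : InfinitePlace K) ((u : 𝓞 K) : K)) := by nlinarith
      exact (Real.log_pos_iff (hupos _).le).mp hlog
    · intro hw
      have h := hneg w hw
      rw [hulog w] at h
      have hlog : Real.log ((w : InfinitePlace K) ((u : 𝓞 K) : K)) < 0 := by nlinarith
      exact (Real.log_neg_iff (hupos _)).mp hlog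
  -- at the distinguished place
  have hw₀lt : (w₀ : InfinitePlace K) ((u : 𝓞 K) : K) < 1 := by
    have hsum := sum_logEmbedding_component u
    rw [← hLg] at hsum
    have hm : (0 : ℝ) < mult (w₀ : InfinitePlace K) := by exact_mod_cast mult_pos
    have hlog : Real.log ((w₀ : InfinitePlace K) ((u : 𝓞 K) : K)) < 0 := by
      nlinarith [hsum, hsumL]
    exact (Real.log_neg_iff (hupos _)).mp hlog
  refine ⟨u, fun w hw => ?_, fun w hw => ?_⟩
  · have hwne : w ≠ w₀ := fun h => hw0 (h ▸ hw)
    exact (hmain ⟨w, hwne⟩).1 hw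
  · by_cases hwne : w = w₀
    · rw [hwne]; exact hw₀lt
    · exact (hmain ⟨w, hwne⟩).2 hw

open NumberField.InfinitePlace NumberField.Units NumberField.Units.dirichletUnitTheorem in
/-- Sign lemma, general case. -/
lemma stmt16_aux_sign' {K : Type*} [Field K] [NumberField K]
    (S : Finset (InfinitePlace K)) (hS : S.Nonempty) (hS' : S ≠ Finset.univ) :
    ∃ u : (𝓞 K)ˣ, (∀ w ∈ S, 1 < w ((u : 𝓞 K) : K)) ∧
      (∀ w ∉ S, w ((u : 𝓞 K) : K) < 1) := by
  classical
  have hinv : ∀ (u : (𝓞 K)ˣ) (w : InfinitePlace K),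
      w (((u⁻¹ : (𝓞 K)ˣ) : 𝓞 K) : K) = (w ((u : 𝓞 K) : K))⁻¹ := by
    intro u w
    have h1 : (((u : (𝓞 K)ˣ) : 𝓞 K) : K) * (((u⁻¹ : (𝓞 K)ˣ) : 𝓞 K) : K) = 1 := by
      rw [← map_mul]
      norm_cast
      rw [mul_inv_cancel]
      simp
    have h2 : w ((u : 𝓞 K) : K) * w (((u⁻¹ : (𝓞 K)ˣ) : 𝓞 K) : K) = 1 := by
      rw [← map_mul, h1, map_one]
    have hp : w ((u : 𝓞 K) : K) ≠ 0 := ne_of_gt (pos_iff.mpr (coe_ne_zero u))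
    exact eq_inv_of_mul_eq_one_left (by rw [mul_comm]; exact h2)
  by_cases hw0 : (w₀ : InfinitePlace K) ∈ S
  · -- apply to the complement and invert
    have hSc : Sᶜ.Nonempty := by
      obtain ⟨w, hw⟩ : ∃ w, w ∉ S := by
        by_contra h
        push_neg at h
        exact hS' (Finset.eq_univ_iff_forall.mpr h)
      exact ⟨w, Finset.mem_compl.mpr hw⟩
    have hw0c : (w₀ : InfinitePlace K) ∉ Sᶜ := by simpa using hw0
    obtain ⟨u, h1, h2⟩ := stmt16_aux_sign Sᶜ hSc hw0c
    refine ⟨u⁻¹, fun w hw => ?_, fun w hw => ?_⟩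
    · rw [hinv]
      have hlt := h2 w (by simpa using hw)
      have hp : 0 < w ((u : 𝓞 K) : K) := pos_iff.mpr (coe_ne_zero u)
      exact (one_lt_inv₀ hp).2 hlt
    · rw [hinv]
      have hgt := h1 w (by simpa using hw)
      have hp : 0 < w ((u : 𝓞 K) : K) := pos_iff.mpr (coe_ne_zero u)
      exact inv_lt_one_of_one_lt₀ hgt
  · exact stmt16_aux_sign S hS hw0

/-- Let `K` be totally real of degree `d ≥ 2` with real embeddings `σ i`.
(a) For every nonempty proper subset `R` of the places there is a totally positive unit `u`
with `σ i u > 1` for `i ∈ R` and `σ i u < 1` for `i ∉ R`.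
(b) For every place `i` and every `C > 0` there is a totally positive unit `v` with
`σ i v > C`. -/
theorem stmt16
    (K : Type*) [Field K] [NumberField K] (d : ℕ) (hd2 : 2 ≤ d)
    (σ : Fin d → (K →+* ℝ)) (hσ : Function.Injective σ)
    (hd : d = Module.finrank ℚ K) :
    (∀ R : Finset (Fin d), R.Nonempty → R ≠ Finset.univ →
      ∃ u : (𝓞 K)ˣ, (∀ i, 0 < σ i ((u : 𝓞 K) : K)) ∧
        (∀ i ∈ R, 1 < σ i ((u : 𝓞 K) : K)) ∧
        (∀ i ∉ R, σ i ((u : 𝓞 K) : K) < 1)) ∧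
    (∀ i : Fin d, ∀ C : ℝ, 0 < C →
      ∃ v : (𝓞 K)ˣ, (∀ j, 0 < σ j ((v : 𝓞 K) : K)) ∧ C < σ i ((v : 𝓞 K) : K)) := by
  classical
  -- the infinite places associated to the real embeddings
  set wp : Fin d → InfinitePlace K :=
    fun i => InfinitePlace.mk (Complex.ofRealHom.comp (σ i)) with hwp
  have hwp_apply : ∀ (i : Fin d) (x : K), wp i x = |σ i x| := by
    intro i x
    rw [hwp]
    simp only [InfinitePlace.apply, RingHom.coe_comp, Function.comp_apply,
      Complex.ofRealHom_eq_coe, Complex.norm_real, Real.norm_eq_abs]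
  have hreal : ∀ i : Fin d,
      NumberField.ComplexEmbedding.conjugate (Complex.ofRealHom.comp (σ i)) =
        Complex.ofRealHom.comp (σ i) := by
    intro i
    ext x
    rw [NumberField.ComplexEmbedding.conjugate_coe_eq]
    simp [Complex.conj_ofReal]
  have hwp_inj : Function.Injective wp := by
    intro i j hij
    have hij' : Complex.ofRealHom.comp (σ i) = Complex.ofRealHom.comp (σ j) := by
      rcases InfinitePlace.mk_eq_iff.mp hij with h | h
      · exact h
      · rw [← hreal i]; exact h
    apply hσ
    ext x
    have := congrArg (fun f => f x) hij'
    simpa [Complex.ofReal_inj] using this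
  -- coercion of powers of units
  have hcoe : ∀ (v : (𝓞 K)ˣ) (m : ℕ) (i : Fin d),
      σ i (((v ^ m : (𝓞 K)ˣ) : 𝓞 K) : K) = (σ i ((v : 𝓞 K) : K)) ^ m := by
    intro v m i
    have h : (((v ^ m : (𝓞 K)ˣ) : 𝓞 K) : K) = (((v : 𝓞 K) : K)) ^ m := by
      push_cast
      ring
    rw [h, map_pow]
  have partA : ∀ R : Finset (Fin d), R.Nonempty → R ≠ Finset.univ →
      ∃ u : (𝓞 K)ˣ, (∀ i, 0 < σ i ((u : 𝓞 K) : K)) ∧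
        (∀ i ∈ R, 1 < σ i ((u : 𝓞 K) : K)) ∧
        (∀ i ∉ R, σ i ((u : 𝓞 K) : K) < 1) := by
    intro R hR hRuniv
    set S : Finset (InfinitePlace K) := R.image wp with hS
    have hSne : S.Nonempty := hR.image wp
    have hSuniv : S ≠ Finset.univ := by
      obtain ⟨i, hi⟩ : ∃ i, i ∉ R := by
        by_contra h
        push_neg at h
        exact hRuniv (Finset.eq_univ_iff_forall.mpr h)
      intro h
      have hmem : wp i ∈ S := h ▸ Finset.mem_univ _
      obtain ⟨j, hj, hji⟩ := Finset.mem_image.mp hmem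
      exact hi (hwp_inj hji ▸ hj)
    obtain ⟨u, h1, h2⟩ := stmt16_aux_sign' S hSne hSuniv
    have habs : ∀ i : Fin d, 0 < |σ i ((u : 𝓞 K) : K)| := by
      intro i
      rw [← hwp_apply]
      exact NumberField.InfinitePlace.pos_iff.mpr (NumberField.Units.coe_ne_zero u)
    refine ⟨u ^ 2, fun i => ?_, fun i hi => ?_, fun i hi => ?_⟩
    · rw [hcoe u 2 i, ← sq_abs]
      exact pow_pos (habs i) 2
    · have hSi : wp i ∈ S := Finset.mem_image_of_mem wp hi
      have hb : 1 < |σ i ((u : 𝓞 K) : K)| := by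
        rw [← hwp_apply]
        exact h1 _ hSi
      rw [hcoe u 2 i]
      nlinarith [sq_abs (σ i ((u : 𝓞 K) : K)), hb]
    · have hSi : wp i ∉ S := by
        intro hmem
        obtain ⟨j, hj, hji⟩ := Finset.mem_image.mp hmem
        exact hi (hwp_inj hji ▸ hj)
      have hb : |σ i ((u : 𝓞 K) : K)| < 1 := by
        rw [← hwp_apply]
        exact h2 _ hSi
      rw [hcoe u 2 i]
      nlinarith [sq_abs (σ i ((u : 𝓞 K) : K)), hb, abs_nonneg (σ i ((u : 𝓞 K) : K))]
  refine ⟨partA, fun i C hC => ?_⟩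
  obtain ⟨j, hj⟩ := Fintype.exists_ne_of_one_lt_card (by rw [Fintype.card_fin]; exact hd2) i
  have hne : ({i} : Finset (Fin d)) ≠ Finset.univ := by
    intro h
    have : j ∈ ({i} : Finset (Fin d)) := h ▸ Finset.mem_univ _
    exact hj (Finset.mem_singleton.mp this)
  obtain ⟨u, hupos, h1, -⟩ := partA {i} ⟨i, Finset.mem_singleton_self i⟩ hne
  have h1i : 1 < σ i ((u : 𝓞 K) : K) := h1 i (Finset.mem_singleton_self i)
  obtain ⟨n, hn⟩ := pow_unbounded_of_one_lt C h1i
  refine ⟨u ^ n, fun k => ?_, ?_⟩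
  · rw [hcoe u n k]
    exact pow_pos (hupos k) n
  · rw [hcoe u n i]
    exact hn
end
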